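/- arXiv:1005.4935 — 5 statements merged into one kernel-verified Lean document; each statement's English description precedes it below -/
import Mathlib

section
/- Let ψ be an analytic function on 𝔻 with ψ(𝔻) ⊆ 𝔻. Then sup_{|α|<1} ∫_𝔻 (1−|α|²)² |ψ'(z)|² / |1−conj(α)ψ(z)|⁴ dA(z) < ∞ if and only if sup_{|α|<1} ∫_𝔻 (1−|α|²) |ψ'(z)|² / |1−conj(α)ψ(z)|³ dA(z) < ∞. -/
/-!
Write `s = 1 - |α|²` and `t = |1 - conj α w|` for `|w| ≤ 1`, so that `s ≤ 2t` and hence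
`s²/t⁴ ≤ 2 s/t³`, which gives one direction. Conversely, where `t ≤ 2s` we have
`s/t³ ≤ 2 s²/t⁴`; otherwise take the dyadic scale `q = 2⁻ᵏ` with `q < t ≤ 2q` and the radial point
`β = (1 - q)α`, for which `1 - |β|² ≥ q` and `|1 - conj β w| ≤ 2t`, so that
`s/t³ ≤ 32 (s/q) (1 - |β|²)²/|1 - conj β w|⁴`. Only scales with `2ᵏ s < 1` occur, and their
coefficients `32 · 2ᵏ s` sum to at most `64`. Integrating against `|ψ'|² dA` bounds the second
supremum by `66` times the first.
-/

open MeasureTheory Metric Complex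

/-- Normalized area measure on the unit disk (total mass 1). -/
noncomputable def dA : Measure ℂ :=
  (ENNReal.ofReal Real.pi)⁻¹ • volume.restrict (ball (0:ℂ) 1)

open ComplexConjugate Finset

section Geometry

variable {α β w : ℂ}

lemma one_sub_norm_le_norm_one_sub_conj_mul (hw : ‖w‖ ≤ 1) :
    1 - ‖α‖ ≤ ‖1 - conj α * w‖ := by
  have h := norm_sub_norm_le (1 : ℂ) (conj α * w)
  rw [norm_one, norm_mul, Complex.norm_conj] at h
  nlinarith [norm_nonneg α]

lemma norm_one_sub_conj_mul_le_one_add (hw : ‖w‖ ≤ 1) :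
    ‖1 - conj α * w‖ ≤ 1 + ‖α‖ := by
  have h := norm_sub_le (1 : ℂ) (conj α * w)
  rw [norm_one, norm_mul, Complex.norm_conj] at h
  nlinarith [norm_nonneg α]

lemma norm_one_sub_conj_mul_le_add (hw : ‖w‖ ≤ 1) :
    ‖1 - conj β * w‖ ≤ ‖1 - conj α * w‖ + ‖α - β‖ := by
  have h : 1 - conj β * w = (1 - conj α * w) + conj (α - β) * w := by
    rw [map_sub]; ring
  calc ‖1 - conj β * w‖ ≤ ‖1 - conj α * w‖ + ‖conj (α - β) * w‖ := h ▸ norm_add_le _ _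
    _ ≤ ‖1 - conj α * w‖ + ‖α - β‖ := by
      rw [norm_mul, Complex.norm_conj]
      gcongr
      exact mul_le_of_le_one_right (norm_nonneg _) hw

lemma one_sub_norm_sq_le_two_mul_norm_one_sub_conj_mul (hw : ‖w‖ ≤ 1) :
    1 - ‖α‖ ^ 2 ≤ 2 * ‖1 - conj α * w‖ := by
  nlinarith [one_sub_norm_le_norm_one_sub_conj_mul (α := α) hw, norm_nonneg α,
    norm_nonneg (1 - conj α * w)]

lemma norm_sub_one_sub_smul_self {q : ℝ} (hq : 0 ≤ q) : ‖α - (1 - q) • α‖ = q * ‖α‖ := by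
  rw [show α - (1 - q) • α = q • α by rw [sub_smul, one_smul, sub_sub_cancel],
    norm_smul, Real.norm_of_nonneg hq]

lemma le_one_sub_norm_one_sub_smul_sq {q : ℝ} (hq0 : 0 ≤ q) (hq1 : q ≤ 1) (hα : ‖α‖ ≤ 1) :
    q ≤ 1 - ‖(1 - q) • α‖ ^ 2 := by
  rw [norm_smul, Real.norm_of_nonneg (by linarith)]
  have : (1 - q) * ‖α‖ ≤ 1 - q := mul_le_of_le_one_right (by linarith) hα
  nlinarith [mul_nonneg (sub_nonneg.2 hq1) (norm_nonneg α)]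

lemma norm_one_sub_smul_lt_one {q : ℝ} (hq0 : 0 ≤ q) (hq1 : q ≤ 1) (hα : ‖α‖ < 1) :
    ‖(1 - q) • α‖ < 1 := by
  rw [norm_smul, Real.norm_of_nonneg (by linarith)]
  nlinarith [norm_nonneg α]

end Geometry

section Kernels

variable {s t q s' t' : ℝ}

lemma div_pow_three_le_of_le_two_mul (hs : 0 ≤ s) (ht : 0 < t) (hts : t ≤ 2 * s) :
    s / t ^ 3 ≤ 2 * (s ^ 2 / t ^ 4) := by
  rw [mul_div_assoc', div_le_div_iff₀ (by positivity) (by positivity)]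
  have := mul_le_mul_of_nonneg_left hts (by positivity : 0 ≤ s * t ^ 3)
  nlinarith

lemma sq_div_pow_four_le_of_le_two_mul (hs : 0 ≤ s) (ht : 0 < t) (hst : s ≤ 2 * t) :
    s ^ 2 / t ^ 4 ≤ 2 * (s / t ^ 3) := by
  rw [mul_div_assoc', div_le_div_iff₀ (by positivity) (by positivity)]
  have := mul_le_mul_of_nonneg_left hst (by positivity : 0 ≤ s * t ^ 3)
  nlinarith

lemma div_pow_three_le_of_scale (hs : 0 ≤ s) (ht : 0 < t) (hq : 0 < q) (htq : t ≤ 2 * q)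
    (hqs' : q ≤ s') (ht' : 0 < t') (ht't : t' ≤ 2 * t) :
    s / t ^ 3 ≤ 32 * (s / q) * (s' ^ 2 / t' ^ 4) := by
  calc s / t ^ 3 = s * t / t ^ 4 := by field_simp
    _ ≤ s * (2 * q) / (t' / 2) ^ 4 := by gcongr; linarith
    _ = 32 * (s / q) * (q ^ 2 / t' ^ 4) := by field_simp; ring
    _ ≤ 32 * (s / q) * (s' ^ 2 / t' ^ 4) := by gcongr

end Kernels

lemma exists_dyadic_scale {t : ℝ} (ht : 0 < t) (ht2 : t ≤ 2) :
    ∃ k : ℕ, (2⁻¹ : ℝ) ^ k < t ∧ t ≤ 2 * (2⁻¹ : ℝ) ^ k := by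
  obtain ⟨k, hk, hk'⟩ := exists_nat_pow_near_of_lt_one (x := t / 2) (y := (2⁻¹ : ℝ))
    (by positivity) (by linarith) (by norm_num) (by norm_num)
  exact ⟨k, by rw [pow_succ] at hk; linarith, by linarith⟩

lemma exists_dyadic_cutoff {s : ℝ} (hs : 0 < s) (hs1 : s ≤ 1) :
    ∃ N : ℕ, (∀ k, 2 ^ k * s < 1 → k < N) ∧ ∑ k ∈ range N, (2 : ℝ) ^ k * s ≤ 2 := by
  obtain ⟨n, hn, hn'⟩ := exists_nat_pow_near (one_le_one_div hs hs1) (by norm_num : (1 : ℝ) < 2)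
  rw [le_div_iff₀ hs] at hn
  rw [div_lt_iff₀ hs] at hn'
  refine ⟨n + 1, fun k hk => ?_, ?_⟩
  · by_contra! hnk
    have := mul_le_mul_of_nonneg_right (pow_le_pow_right₀ (by norm_num : (1 : ℝ) ≤ 2) hnk) hs.le
    linarith
  · rw [← sum_mul, geom_sum_eq (by norm_num : (2 : ℝ) ≠ 1), pow_succ]
    nlinarith

lemma ofReal_div_pow_three_le_sum {α w : ℂ} (hα : ‖α‖ < 1) (hw : ‖w‖ ≤ 1) {N : ℕ}
    (hN : ∀ k, 2 ^ k * (1 - ‖α‖ ^ 2) < 1 → k < N) :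
    ENNReal.ofReal ((1 - ‖α‖ ^ 2) / ‖1 - conj α * w‖ ^ 3) ≤
      2 * ENNReal.ofReal ((1 - ‖α‖ ^ 2) ^ 2 / ‖1 - conj α * w‖ ^ 4) +
      ∑ k ∈ range N, ENNReal.ofReal (32 * (2 ^ k * (1 - ‖α‖ ^ 2))) *
        ENNReal.ofReal ((1 - ‖(1 - (2⁻¹ : ℝ) ^ k) • α‖ ^ 2) ^ 2 /
          ‖1 - conj ((1 - (2⁻¹ : ℝ) ^ k) • α) * w‖ ^ 4) := by
  set s := 1 - ‖α‖ ^ 2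
  set t := ‖1 - conj α * w‖
  have hs : 0 ≤ s := by nlinarith [norm_nonneg α]
  have ht : 0 < t := by linarith [one_sub_norm_le_norm_one_sub_conj_mul (α := α) hw]
  by_cases hts : t ≤ 2 * s
  · refine le_add_right ?_
    rw [← ENNReal.ofReal_ofNat 2, ← ENNReal.ofReal_mul zero_le_two]
    exact ENNReal.ofReal_le_ofReal (div_pow_three_le_of_le_two_mul hs ht hts)
  obtain ⟨k, hqt, htq⟩ := exists_dyadic_scale ht
    (by linarith [norm_one_sub_conj_mul_le_one_add (α := α) hw])
  set q := (2⁻¹ : ℝ) ^ k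
  set β := (1 - q) • α
  have hq : 0 < q := by positivity
  have hq1 : q ≤ 1 := pow_le_one₀ (by norm_num) (by norm_num)
  have h2q : 2 ^ k * q = 1 := by rw [← mul_pow]; norm_num
  have hk : k < N := hN k (by nlinarith)
  have htβ : ‖1 - conj β * w‖ ≤ 2 * t := by
    have := norm_one_sub_conj_mul_le_add (α := α) (β := β) hw
    rw [norm_sub_one_sub_smul_self hq.le] at this
    nlinarith [norm_nonneg α]
  have hβ : 0 < ‖1 - conj β * w‖ := by
    linarith [one_sub_norm_le_norm_one_sub_conj_mul (α := β) hw,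
      norm_one_sub_smul_lt_one hq.le hq1 hα]
  refine le_add_left (le_trans ?_ (single_le_sum (fun _ _ => bot_le) (mem_range.2 hk)))
  have hsq : 2 ^ k * s = s / q := by rw [eq_div_iff hq.ne', mul_right_comm, h2q, one_mul]
  rw [← ENNReal.ofReal_mul (by positivity), hsq]
  exact ENNReal.ofReal_le_ofReal (div_pow_three_le_of_scale hs ht hq htq
    (le_one_sub_norm_one_sub_smul_sq hq.le hq1 hα.le) hβ htβ)

lemma ENNReal.ofReal_mul_div_eq_ofReal_div_mul {a b : ℝ} (ha : 0 ≤ a) (hb : 0 ≤ b) (d : ℝ) :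
    ENNReal.ofReal (a * d / b) = ENNReal.ofReal (a / b) * ENNReal.ofReal d := by
  rw [mul_div_right_comm, ENNReal.ofReal_mul (div_nonneg ha hb)]

section Integrals

variable {X : Type*} [MeasurableSpace X] {μ : Measure X} {w : X → ℂ} {g : X → ℝ}

lemma lintegral_sq_div_pow_four_le (hw1 : ∀ᵐ x ∂μ, ‖w x‖ ≤ 1) {α : ℂ} (hα : ‖α‖ < 1) :
    ∫⁻ x, ENNReal.ofReal ((1 - ‖α‖ ^ 2) ^ 2 * g x / ‖1 - conj α * w x‖ ^ 4) ∂μ ≤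
      2 * ∫⁻ x, ENNReal.ofReal ((1 - ‖α‖ ^ 2) * g x / ‖1 - conj α * w x‖ ^ 3) ∂μ := by
  have hs : 0 ≤ 1 - ‖α‖ ^ 2 := by nlinarith [norm_nonneg α]
  rw [← lintegral_const_mul' _ _ ENNReal.ofNat_ne_top]
  refine lintegral_mono_ae (hw1.mono fun x hx => ?_)
  have ht : 0 < ‖1 - conj α * w x‖ := by
    linarith [one_sub_norm_le_norm_one_sub_conj_mul (α := α) hx]
  rw [ENNReal.ofReal_mul_div_eq_ofReal_div_mul (by positivity) (by positivity),
    ENNReal.ofReal_mul_div_eq_ofReal_div_mul hs (by positivity), ← mul_assoc,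
    ← ENNReal.ofReal_ofNat 2, ← ENNReal.ofReal_mul zero_le_two]
  gcongr
  exact sq_div_pow_four_le_of_le_two_mul hs ht
    (one_sub_norm_sq_le_two_mul_norm_one_sub_conj_mul hx)

lemma lintegral_div_pow_three_le (hw : AEMeasurable w μ) (hw1 : ∀ᵐ x ∂μ, ‖w x‖ ≤ 1)
    (hg : AEMeasurable g μ) {α : ℂ} (hα : ‖α‖ < 1) :
    ∫⁻ x, ENNReal.ofReal ((1 - ‖α‖ ^ 2) * g x / ‖1 - conj α * w x‖ ^ 3) ∂μ ≤
      66 * ⨆ β ∈ ball (0 : ℂ) 1,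
        ∫⁻ x, ENNReal.ofReal ((1 - ‖β‖ ^ 2) ^ 2 * g x / ‖1 - conj β * w x‖ ^ 4) ∂μ := by
  set f : ℂ → X → ENNReal := fun β x =>
    ENNReal.ofReal ((1 - ‖β‖ ^ 2) ^ 2 * g x / ‖1 - conj β * w x‖ ^ 4)
  set M := ⨆ β ∈ ball (0 : ℂ) 1, ∫⁻ x, f β x ∂μ
  have hM : ∀ β : ℂ, ‖β‖ < 1 → ∫⁻ x, f β x ∂μ ≤ M := fun β hβ =>
    le_iSup₂ (f := fun β _ => ∫⁻ x, f β x ∂μ) β (mem_ball_zero_iff.2 hβ)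
  set s := 1 - ‖α‖ ^ 2
  have hs : 0 < s := by nlinarith [norm_nonneg α]
  obtain ⟨N, hN, hsum⟩ := exists_dyadic_cutoff hs (by nlinarith [norm_nonneg α])
  set c : ℕ → ENNReal := fun k => ENNReal.ofReal (32 * (2 ^ k * s))
  set β : ℕ → ℂ := fun k => (1 - (2⁻¹ : ℝ) ^ k) • α
  have hβ : ∀ k, ‖β k‖ < 1 := fun k =>
    norm_one_sub_smul_lt_one (by positivity) (pow_le_one₀ (by norm_num) (by norm_num)) hα
  have hc : ∑ k ∈ range N, c k ≤ 64 := by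
    rw [← ENNReal.ofReal_sum_of_nonneg fun k _ => by positivity, ← mul_sum,
      ← ENNReal.ofReal_ofNat 64]
    exact ENNReal.ofReal_le_ofReal (by linarith)
  calc ∫⁻ x, ENNReal.ofReal (s * g x / ‖1 - conj α * w x‖ ^ 3) ∂μ
      ≤ ∫⁻ x, 2 * f α x + ∑ k ∈ range N, c k * f (β k) x ∂μ := by
        refine lintegral_mono_ae (hw1.mono fun x hx => ?_)
        rw [ENNReal.ofReal_mul_div_eq_ofReal_div_mul hs.le (by positivity)]
        refine (mul_le_mul_left (ofReal_div_pow_three_le_sum hα hx hN) _).trans_eq ?_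
        rw [add_mul, sum_mul, mul_assoc,
          ← ENNReal.ofReal_mul_div_eq_ofReal_div_mul (sq_nonneg _) (by positivity)]
        refine congrArg _ (sum_congr rfl fun k _ => ?_)
        rw [mul_assoc, ← ENNReal.ofReal_mul_div_eq_ofReal_div_mul (sq_nonneg _) (by positivity)]
    _ = 2 * ∫⁻ x, f α x ∂μ + ∑ k ∈ range N, c k * ∫⁻ x, f (β k) x ∂μ := by
        rw [lintegral_add_left' (by fun_prop), lintegral_const_mul' _ _ ENNReal.ofNat_ne_top,
          lintegral_finsetSum' _ fun k _ => by fun_prop]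
        exact congrArg _ (sum_congr rfl fun k _ =>
          lintegral_const_mul' _ _ ENNReal.ofReal_ne_top)
    _ ≤ 2 * M + ∑ k ∈ range N, c k * M := by
        gcongr with k
        · exact hM α hα
        · exact hM (β k) (hβ k)
    _ ≤ 66 * M := by
        rw [← sum_mul, ← add_mul]
        gcongr
        calc (2 : ENNReal) + ∑ k ∈ range N, c k ≤ 2 + 64 := by gcongr
          _ = 66 := by norm_num

theorem iSup_lintegral_sq_div_pow_four_lt_top_iff (hw : AEMeasurable w μ)
    (hw1 : ∀ᵐ x ∂μ, ‖w x‖ ≤ 1) (hg : AEMeasurable g μ) :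
    (⨆ α ∈ ball (0 : ℂ) 1,
        ∫⁻ x, ENNReal.ofReal ((1 - ‖α‖ ^ 2) ^ 2 * g x / ‖1 - conj α * w x‖ ^ 4) ∂μ) < ⊤ ↔
      (⨆ α ∈ ball (0 : ℂ) 1,
        ∫⁻ x, ENNReal.ofReal ((1 - ‖α‖ ^ 2) * g x / ‖1 - conj α * w x‖ ^ 3) ∂μ) < ⊤ := by
  constructor
  · refine fun h => (iSup₂_le fun α hα => ?_).trans_lt
      (ENNReal.mul_lt_top (ENNReal.ofNat_lt_top (n := 66)) h)
    exact lintegral_div_pow_three_le hw hw1 hg (mem_ball_zero_iff.1 hα)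
  · refine fun h => (iSup₂_le fun α hα => ?_).trans_lt
      (ENNReal.mul_lt_top (ENNReal.ofNat_lt_top (n := 2)) h)
    refine (lintegral_sq_div_pow_four_le hw1 (mem_ball_zero_iff.1 hα)).trans ?_
    gcongr
    exact le_iSup₂ (f := fun α (_ : α ∈ ball (0 : ℂ) 1) =>
      ∫⁻ x, ENNReal.ofReal ((1 - ‖α‖ ^ 2) * g x / ‖1 - conj α * w x‖ ^ 3) ∂μ) α hα

end Integrals

theorem stmt0 (ψ : ℂ → ℂ) (hψ : DifferentiableOn ℂ ψ (ball (0:ℂ) 1))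
    (hmap : Set.MapsTo ψ (ball (0:ℂ) 1) (ball (0:ℂ) 1)) :
    (⨆ α ∈ ball (0:ℂ) 1, ∫⁻ z, ENNReal.ofReal
        ((1 - ‖α‖ ^ 2) ^ 2 * ‖deriv ψ z‖ ^ 2 /
          ‖1 - (starRingEnd ℂ) α * ψ z‖ ^ 4) ∂dA) < ⊤ ↔
    (⨆ α ∈ ball (0:ℂ) 1, ∫⁻ z, ENNReal.ofReal
        ((1 - ‖α‖ ^ 2) * ‖deriv ψ z‖ ^ 2 /
          ‖1 - (starRingEnd ℂ) α * ψ z‖ ^ 3) ∂dA) < ⊤ := by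
  have hball : ∀ᵐ z ∂dA, z ∈ ball (0 : ℂ) 1 :=
    Measure.ae_smul_measure (ae_restrict_mem measurableSet_ball) _
  exact iSup_lintegral_sq_div_pow_four_lt_top_iff
    ((hψ.continuousOn.aemeasurable measurableSet_ball).smul_measure _)
    (hball.mono fun z hz => (mem_ball_zero_iff.1 (hmap hz)).le)
    ((measurable_deriv ψ).norm.pow_const 2).aemeasurable
end

section
/- Let ψ be analytic on 𝔻 with ψ(𝔻) ⊆ 𝔻 and ∫_𝔻 (|ψ''(z)| + |ψ'(z)|²) dA(z) < ∞, let f be analytic on 𝔻 with ∫_𝔻 |f''(z)| dA(z) < ∞, and let (α_n) be a sequence in 𝔻 with |α_n| → 1. Then for every ε > 0 there exists N such that for all n ≥ N: ∫_𝔻 |(φ_{α_n}∘ψ)''(z) − f''(z)| dA(z) ≥ ∫_𝔻 |(φ_{α_n}∘ψ)''(z)| dA(z) − ε. -/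
open MeasureTheory Metric Complex Filter

/-- The Möbius map `φ_a(z) = (a - z)/(1 - conj a · z)`. -/
noncomputable def phi (a z : ℂ) : ℂ := (a - z) / (1 - (starRingEnd ℂ) a * z)

/-!
Write `Gₙ = (φ_{αₙ} ∘ ψ)''`. The chain rule gives
`|Gₙ| ≤ 2 (1 - |αₙ|²) / (1 - |αₙ| |ψ|)³ · (|ψ''| + |ψ'|²)`, so each `Gₙ` is integrable, and on
a disk `|z| ≤ r < 1`, where `|ψ|` stays below some `ρ < 1`, `∫ |Gₙ| ≤ C (1 - |αₙ|²) → 0`.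
Choose `r` so that `f''` has mass `< ε/2` outside that disk; there `|Gₙ| ≤ |Gₙ - f''| + |f''|`.
-/

theorem deriv_deriv_comp_eq {g g' ψ : ℂ → ℂ} {U : Set ℂ} (hU : IsOpen U)
    (hψ : DifferentiableOn ℂ ψ U) (hg : ∀ w ∈ U, HasDerivAt g (g' (ψ w)) (ψ w))
    {z c : ℂ} (hz : z ∈ U) (hg' : HasDerivAt g' c (ψ z)) :
    deriv (deriv (fun w => g (ψ w))) z
      = c * deriv ψ z ^ 2 + g' (ψ z) * deriv (deriv ψ) z := by
  have hψa : AnalyticOnNhd ℂ ψ U := hψ.analyticOnNhd hU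
  have hderiv : deriv (fun w => g (ψ w)) =ᶠ[nhds z] fun w => g' (ψ w) * deriv ψ w := by
    filter_upwards [hU.mem_nhds hz] with w hw
    exact ((hg w hw).comp w (hψa w hw).differentiableAt.hasDerivAt).deriv
  rw [hderiv.deriv_eq]
  have hψ' : HasDerivAt ψ (deriv ψ z) z := (hψa z hz).differentiableAt.hasDerivAt
  have hψ'' : HasDerivAt (deriv ψ) (deriv (deriv ψ) z) z :=
    (hψa.deriv z hz).differentiableAt.hasDerivAt
  rw [HasDerivAt.deriv (f := fun w => g' (ψ w) * deriv ψ w) ((hg'.comp z hψ').mul hψ'')]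
  simp only [Function.comp_apply]
  ring

noncomputable def phiDeriv (a z : ℂ) : ℂ :=
  ((starRingEnd ℂ) a * a - 1) / (1 - (starRingEnd ℂ) a * z) ^ 2

section Mobius

variable {a z w : ℂ}

theorem one_sub_conj_mul_ne_zero (ha : ‖a‖ < 1) (hw : ‖w‖ ≤ 1) :
    1 - (starRingEnd ℂ) a * w ≠ 0 := by
  intro h
  have : ‖(starRingEnd ℂ) a * w‖ = 1 := by rw [← sub_eq_zero.mp h, norm_one]
  rw [norm_mul, norm_conj] at this
  nlinarith [norm_nonneg a, norm_nonneg w]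

theorem hasDerivAt_one_sub_conj_mul (a z : ℂ) :
    HasDerivAt (fun w => 1 - (starRingEnd ℂ) a * w) (-(starRingEnd ℂ) a) z := by
  simpa using ((hasDerivAt_id z).const_mul ((starRingEnd ℂ) a)).const_sub 1

theorem hasDerivAt_phi (h : 1 - (starRingEnd ℂ) a * z ≠ 0) :
    HasDerivAt (phi a) (phiDeriv a z) z := by
  refine (((hasDerivAt_id z).const_sub a).div (hasDerivAt_one_sub_conj_mul a z) h).congr_deriv ?_
  simp only [phiDeriv, id]
  ring

theorem hasDerivAt_phiDeriv (h : 1 - (starRingEnd ℂ) a * z ≠ 0) :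
    HasDerivAt (phiDeriv a)
      (2 * (starRingEnd ℂ) a * ((starRingEnd ℂ) a * a - 1) / (1 - (starRingEnd ℂ) a * z) ^ 3)
      z := by
  refine ((hasDerivAt_const z ((starRingEnd ℂ) a * a - 1)).div
    ((hasDerivAt_one_sub_conj_mul a z).fun_pow 2) (pow_ne_zero 2 h)).congr_deriv ?_
  field_simp
  ring

theorem sub_norm_mul_norm_le_norm_one_sub_conj_mul (a w : ℂ) :
    1 - ‖a‖ * ‖w‖ ≤ ‖1 - (starRingEnd ℂ) a * w‖ := by
  simpa [norm_mul] using norm_sub_norm_le (1 : ℂ) ((starRingEnd ℂ) a * w)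

theorem norm_conj_mul_self_sub_one (ha : ‖a‖ ≤ 1) :
    ‖(starRingEnd ℂ) a * a - 1‖ = 1 - ‖a‖ ^ 2 := by
  rw [conj_mul', ← norm_neg, neg_sub, ← ofReal_pow, ← ofReal_one, ← ofReal_sub, norm_real,
    Real.norm_of_nonneg (by nlinarith [norm_nonneg a])]

end Mobius

theorem dA_compl_ball : dA (ball 0 1)ᶜ = 0 := by
  simp [dA, Measure.restrict_apply measurableSet_ball.compl]

theorem ae_mem_ball_dA : ∀ᵐ z ∂dA, z ∈ ball (0 : ℂ) 1 :=
  measure_eq_zero_iff_ae_notMem.mp dA_compl_ball |>.mono fun _ h => not_not.mp h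

theorem exists_setIntegral_compl_closedBall_lt {X : Type*} [PseudoMetricSpace X]
    [MeasurableSpace X] [OpensMeasurableSpace X] {μ : Measure X} {c : X} {R : ℝ}
    (hμ : μ (ball c R)ᶜ = 0) {g : X → ℝ} (hg : Integrable g μ) {ε : ℝ} (hε : 0 < ε) :
    ∃ r < R, ∫ x in (closedBall c r)ᶜ, g x ∂μ < ε := by
  set s : ℕ → Set X := fun k => (closedBall c (R - 1 / (k + 1)))ᶜ
  have hanti : Antitone s := fun k l hkl => Set.compl_subset_compl.mpr <|
    closedBall_subset_closedBall <| sub_le_sub_left (Nat.one_div_le_one_div hkl) R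
  have hnull : μ (⋂ k, s k) = 0 := by
    refine measure_mono_null (fun x hx => ?_) hμ
    simp only [s, Set.mem_iInter, Set.mem_compl_iff, mem_closedBall, not_le] at hx
    simp only [Set.mem_compl_iff, mem_ball, not_lt]
    by_contra! hxR
    obtain ⟨k, hk⟩ := exists_nat_one_div_lt (sub_pos.mpr hxR)
    linarith [hx k]
  have htend := tendsto_setIntegral_of_antitone (fun k => measurableSet_closedBall.compl)
    hanti ⟨0, hg.integrableOn⟩
  rw [setIntegral_measure_zero _ hnull] at htend
  obtain ⟨k, hk⟩ := (htend.eventually_lt_const hε).exists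
  exact ⟨R - 1 / (k + 1), sub_lt_self R Nat.one_div_pos_of_nat, hk⟩

theorem integral_norm_le_integral_norm_sub_add {X E : Type*} [MeasurableSpace X]
    [NormedAddCommGroup E] {μ : Measure X} {g f : X → E} (hg : Integrable g μ)
    (hf : Integrable f μ) {s : Set X} (hs : MeasurableSet s) :
    ∫ x, ‖g x‖ ∂μ ≤ ∫ x, ‖g x - f x‖ ∂μ + ∫ x in s, ‖g x‖ ∂μ + ∫ x in sᶜ, ‖f x‖ ∂μ := by
  have hgf : Integrable (fun x => ‖g x - f x‖) μ := (hg.sub hf).norm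
  have hcompl : ∫ x in sᶜ, ‖g x‖ ∂μ ≤ ∫ x in sᶜ, ‖g x - f x‖ ∂μ + ∫ x in sᶜ, ‖f x‖ ∂μ := by
    rw [← integral_add hgf.integrableOn hf.norm.integrableOn]
    refine integral_mono hg.norm.integrableOn (hgf.add hf.norm).integrableOn fun x => ?_
    simpa using norm_le_norm_sub_add (g x) (f x)
  have hsub : ∫ x in sᶜ, ‖g x - f x‖ ∂μ ≤ ∫ x, ‖g x - f x‖ ∂μ :=
    setIntegral_le_integral hgf (ae_of_all _ fun _ => norm_nonneg _)
  rw [← integral_add_compl hs hg.norm]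
  linarith

section Composition

variable {ψ : ℂ → ℂ} {a z : ℂ}

theorem deriv_deriv_phi_comp (hψ : DifferentiableOn ℂ ψ (ball 0 1))
    (hmap : Set.MapsTo ψ (ball 0 1) (ball 0 1)) (ha : ‖a‖ < 1) (hz : z ∈ ball (0 : ℂ) 1) :
    deriv (deriv (fun w => phi a (ψ w))) z
      = 2 * (starRingEnd ℂ) a * ((starRingEnd ℂ) a * a - 1)
          / (1 - (starRingEnd ℂ) a * ψ z) ^ 3 * deriv ψ z ^ 2
        + phiDeriv a (ψ z) * deriv (deriv ψ) z := by
  have hne : ∀ w ∈ ball (0 : ℂ) 1, 1 - (starRingEnd ℂ) a * ψ w ≠ 0 := fun w hw =>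
    one_sub_conj_mul_ne_zero ha (mem_ball_zero_iff.mp (hmap hw)).le
  exact deriv_deriv_comp_eq isOpen_ball hψ (fun w hw => hasDerivAt_phi (hne w hw)) hz
    (hasDerivAt_phiDeriv (hne z hz))

theorem norm_deriv_deriv_phi_comp_le (hψ : DifferentiableOn ℂ ψ (ball 0 1))
    (hmap : Set.MapsTo ψ (ball 0 1) (ball 0 1)) (ha : ‖a‖ < 1) (hz : z ∈ ball (0 : ℂ) 1)
    {d : ℝ} (hd : 0 < d) (hdψ : d ≤ 1 - ‖a‖ * ‖ψ z‖) :
    ‖deriv (deriv (fun w => phi a (ψ w))) z‖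
      ≤ (1 - ‖a‖ ^ 2) * (2 / d ^ 3) * (‖deriv (deriv ψ) z‖ + ‖deriv ψ z‖ ^ 2) := by
  rw [deriv_deriv_phi_comp hψ hmap ha hz]
  refine (norm_add_le _ _).trans ?_
  simp only [phiDeriv, norm_mul, norm_div, norm_pow, norm_conj, norm_conj_mul_self_sub_one ha.le,
    Complex.norm_ofNat]
  set δ := ‖1 - (starRingEnd ℂ) a * ψ z‖
  have hdδ : d ≤ δ := hdψ.trans (sub_norm_mul_norm_le_norm_one_sub_conj_mul a (ψ z))
  have hd1 : d ≤ 1 := hdψ.trans (by simp only [sub_le_self_iff]; positivity)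
  have hnum : 0 ≤ 1 - ‖a‖ ^ 2 := by nlinarith [norm_nonneg a]
  have h2 : ‖a‖ * (1 - ‖a‖ ^ 2) / δ ^ 3 ≤ (1 - ‖a‖ ^ 2) / d ^ 3 :=
    div_le_div₀ hnum (mul_le_of_le_one_left hnum ha.le) (by positivity)
      (pow_le_pow_left₀ hd.le hdδ 3)
  have h1 : (1 - ‖a‖ ^ 2) / δ ^ 2 ≤ 2 * (1 - ‖a‖ ^ 2) / d ^ 3 := by
    calc (1 - ‖a‖ ^ 2) / δ ^ 2 ≤ (1 - ‖a‖ ^ 2) / d ^ 2 :=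
          div_le_div_of_nonneg_left hnum (by positivity) (pow_le_pow_left₀ hd.le hdδ 2)
      _ ≤ 2 * (1 - ‖a‖ ^ 2) / d ^ 3 := by
          rw [div_le_div_iff₀ (by positivity) (by positivity)]
          nlinarith [mul_nonneg (mul_nonneg hnum (sq_nonneg d)) (by linarith : (0:ℝ) ≤ 2 - d)]
  linear_combination (2 * ‖deriv ψ z‖ ^ 2) * h2 + ‖deriv (deriv ψ) z‖ * h1

theorem integrable_deriv_deriv_phi_comp (hψ : DifferentiableOn ℂ ψ (ball 0 1))
    (hmap : Set.MapsTo ψ (ball 0 1) (ball 0 1))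
    (hK : Integrable (fun z => ‖deriv (deriv ψ) z‖ + ‖deriv ψ z‖ ^ 2) dA) (ha : ‖a‖ < 1) :
    Integrable (deriv (deriv (fun w => phi a (ψ w)))) dA := by
  refine (hK.const_mul ((1 - ‖a‖ ^ 2) * (2 / (1 - ‖a‖) ^ 3))).mono'
    (measurable_deriv _).aestronglyMeasurable (ae_mem_ball_dA.mono fun z hz => ?_)
  refine norm_deriv_deriv_phi_comp_le hψ hmap ha hz (sub_pos.mpr ha) ?_
  have hψz : ‖ψ z‖ < 1 := mem_ball_zero_iff.mp (hmap hz)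
  nlinarith [norm_nonneg a]

theorem tendsto_setIntegral_closedBall_norm_deriv_deriv_phi_comp
    (hψ : DifferentiableOn ℂ ψ (ball 0 1)) (hmap : Set.MapsTo ψ (ball 0 1) (ball 0 1))
    (hK : Integrable (fun z => ‖deriv (deriv ψ) z‖ + ‖deriv ψ z‖ ^ 2) dA)
    {α : ℕ → ℂ} (hα : ∀ n, ‖α n‖ < 1) (hα1 : Tendsto (fun n => ‖α n‖) atTop (nhds 1))
    {r : ℝ} (hr : r < 1) :
    Tendsto (fun n => ∫ z in closedBall 0 r, ‖deriv (deriv (fun w => phi (α n) (ψ w))) z‖ ∂dA)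
      atTop (nhds 0) := by
  have hrS : closedBall (0 : ℂ) r ⊆ ball 0 1 := closedBall_subset_ball hr
  obtain ⟨ρ, hρ, hψρ⟩ : ∃ ρ < 1, ψ '' closedBall 0 r ⊆ ball 0 ρ :=
    exists_lt_subset_ball ((isCompact_closedBall 0 r).image_of_continuousOn
      (hψ.continuousOn.mono hrS)).isClosed ((Set.mapsTo_iff_image_subset.mp hmap).trans'
        (Set.image_mono hrS))
  set C := 2 / (1 - ρ) ^ 3 * ∫ z, ‖deriv (deriv ψ) z‖ + ‖deriv ψ z‖ ^ 2 ∂dA with hC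
  have hbound : ∀ n, ∫ z in closedBall 0 r, ‖deriv (deriv (fun w => phi (α n) (ψ w))) z‖ ∂dA
      ≤ (1 - ‖α n‖ ^ 2) * C := by
    intro n
    have hpointwise : ∀ᵐ z ∂dA.restrict (closedBall 0 r),
        ‖deriv (deriv (fun w => phi (α n) (ψ w))) z‖
          ≤ (1 - ‖α n‖ ^ 2) * (2 / (1 - ρ) ^ 3)
            * (‖deriv (deriv ψ) z‖ + ‖deriv ψ z‖ ^ 2) := by
      refine (ae_restrict_mem measurableSet_closedBall).mono fun z hz => ?_
      refine norm_deriv_deriv_phi_comp_le hψ hmap (hα n) (hrS hz) (sub_pos.mpr hρ) ?_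
      have hψz : ‖ψ z‖ < ρ := mem_ball_zero_iff.mp (hψρ ⟨z, hz, rfl⟩)
      nlinarith [norm_nonneg (α n), norm_nonneg (ψ z), hα n]
    calc _ ≤ ∫ z in closedBall 0 r, (1 - ‖α n‖ ^ 2) * (2 / (1 - ρ) ^ 3)
            * (‖deriv (deriv ψ) z‖ + ‖deriv ψ z‖ ^ 2) ∂dA :=
          integral_mono_of_nonneg (ae_of_all _ fun _ => norm_nonneg _)
            (hK.integrableOn.const_mul _) hpointwise
      _ = (1 - ‖α n‖ ^ 2) * (2 / (1 - ρ) ^ 3)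
            * ∫ z in closedBall 0 r, ‖deriv (deriv ψ) z‖ + ‖deriv ψ z‖ ^ 2 ∂dA :=
          integral_const_mul _ _
      _ ≤ (1 - ‖α n‖ ^ 2) * C := by
          rw [mul_assoc, hC]
          have : 0 ≤ 1 - ‖α n‖ ^ 2 := by nlinarith [norm_nonneg (α n), hα n]
          have : 0 < 1 - ρ := sub_pos.mpr hρ
          gcongr
          · exact ae_of_all _ fun _ => by positivity
          · exact Measure.restrict_le_self
  have hlim : Tendsto (fun n => (1 - ‖α n‖ ^ 2) * C) atTop (nhds 0) := by
    simpa using ((tendsto_const_nhds (x := (1 : ℝ))).sub (hα1.pow 2)).mul_const C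
  exact tendsto_of_tendsto_of_tendsto_of_le_of_le tendsto_const_nhds hlim
    (fun n => integral_nonneg fun _ => norm_nonneg _) hbound

end Composition

theorem stmt2_general (ψ f : ℂ → ℂ)
    (hψ : DifferentiableOn ℂ ψ (ball (0:ℂ) 1))
    (hmap : Set.MapsTo ψ (ball (0:ℂ) 1) (ball (0:ℂ) 1))
    (hψint : (∫⁻ z, ENNReal.ofReal
        (norm (deriv (deriv ψ) z) + norm (deriv ψ z) ^ 2) ∂dA) < ⊤)
    (hfint : (∫⁻ z, ENNReal.ofReal (norm (deriv (deriv f) z)) ∂dA) < ⊤)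
    (α : ℕ → ℂ) (hα : ∀ n, α n ∈ ball (0:ℂ) 1)
    (hα1 : Tendsto (fun n => norm (α n)) atTop (nhds 1)) :
    ∀ ε > (0:ℝ), ∃ N : ℕ, ∀ n ≥ N,
      (∫ z, norm (deriv (deriv (fun w => phi (α n) (ψ w))) z - deriv (deriv f) z) ∂dA)
        ≥ (∫ z, norm (deriv (deriv (fun w => phi (α n) (ψ w))) z) ∂dA) - ε := by
  intro ε hε
  have hF : Integrable (deriv (deriv f)) dA :=
    ⟨(measurable_deriv _).aestronglyMeasurable, (hasFiniteIntegral_iff_norm _).mpr hfint⟩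
  have hK : Integrable (fun z => ‖deriv (deriv ψ) z‖ + ‖deriv ψ z‖ ^ 2) dA :=
    ⟨((measurable_deriv _).norm.add ((measurable_deriv _).norm.pow_const 2)).aestronglyMeasurable,
      (hasFiniteIntegral_iff_ofReal (ae_of_all _ fun _ => by positivity)).mpr hψint⟩
  have hαn : ∀ n, ‖α n‖ < 1 := fun n => mem_ball_zero_iff.mp (hα n)
  obtain ⟨r, hr, htail⟩ :=
    exists_setIntegral_compl_closedBall_lt dA_compl_ball hF.norm (half_pos hε)
  obtain ⟨N, hN⟩ := eventually_atTop.mp <|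
    (tendsto_setIntegral_closedBall_norm_deriv_deriv_phi_comp hψ hmap hK hαn hα1 hr)
      |>.eventually_lt_const (half_pos hε)
  refine ⟨N, fun n hn => ?_⟩
  have hsplit := integral_norm_le_integral_norm_sub_add
    (integrable_deriv_deriv_phi_comp hψ hmap hK (hαn n)) hF
    (measurableSet_closedBall (x := 0) (ε := r))
  linarith [hN n hn]

theorem stmt2 (ψ f : ℂ → ℂ)
    (hψ : DifferentiableOn ℂ ψ (ball (0:ℂ) 1))
    (hmap : Set.MapsTo ψ (ball (0:ℂ) 1) (ball (0:ℂ) 1))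
    (hψint : (∫⁻ z, ENNReal.ofReal
        (norm (deriv (deriv ψ) z) + norm (deriv ψ z) ^ 2) ∂dA) < ⊤)
    (hf : DifferentiableOn ℂ f (ball (0:ℂ) 1))
    (hfint : (∫⁻ z, ENNReal.ofReal (norm (deriv (deriv f) z)) ∂dA) < ⊤)
    (α : ℕ → ℂ) (hα : ∀ n, α n ∈ ball (0:ℂ) 1)
    (hα1 : Tendsto (fun n => norm (α n)) atTop (nhds 1)) :
    ∀ ε > (0:ℝ), ∃ N : ℕ, ∀ n ≥ N,
      (∫ z, norm (deriv (deriv (fun w => phi (α n) (ψ w))) z - deriv (deriv f) z) ∂dA)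
        ≥ (∫ z, norm (deriv (deriv (fun w => phi (α n) (ψ w))) z) ∂dA) - ε :=
  stmt2_general ψ f hψ hmap hψint hfint α hα hα1
end

section
/- There exists an absolute constant c > 0 with the following property: for every analytic function f on 𝔻 satisfying f(0) = f'(0) = 0, lim_{ε→0⁺} f(1−ε) = 1 and lim_{ε→0⁺} ε·f'(1−ε) = 0, and for every r ∈ (0, 1/2], one has ∫_{Ω_r} |f''(z)| dA(z) ≥ c·r, where Ω_r = {z : |z| ≤ r} ∪ ⋃_{|z|≤r} [z,1] and [z,1] denotes the closed line segment from z to 1. -/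
open MeasureTheory Metric Complex Filter

/-- `Ω_r = {z : |z| ≤ r} ∪ ⋃_{|z| ≤ r} [z,1]`. -/
def Omega (r : ℝ) : Set ℂ :=
  {z : ℂ | ‖z‖ ≤ r} ∪ ⋃ z ∈ {z : ℂ | ‖z‖ ≤ r}, segment ℝ z 1

/-!
With `φ(x) = f(x) + (1 - x) f'(x)` one has `φ' = (1 - x) f''`, `φ(0) = 0` and `φ(1 - ε) → 1`,
hence `∫₀¹ (1 - x) |f''(x)| dx ≥ 1`. By the sub-mean value property, `|f''(x)|` is at most the
mean of `|f''|` over the disc of radius `(1 - x) r` about `x`, and this disc lies in `Ω_r ∩ 𝔻`.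
Integrating in `x` and exchanging the integrals, a point `w` lies only in discs with
`|x - Re w| ≲ (1 - Re w) r` and `1 - x ≍ 1 - Re w`, so its total weight is `O(1 / r)`.
-/

open Set Real
open scoped ENNReal Topology

theorem lintegral_eq_lintegral_Ioi_mul_lintegral_circleMap {F : ℂ → ℝ≥0∞} (hF : Measurable F)
    (c : ℂ) :
    ∫⁻ w, F w = ∫⁻ ρ in Ioi 0, ENNReal.ofReal ρ * ∫⁻ θ in Ioo (-π) π, F (circleMap c ρ θ) := by
  have hpolar (p : ℝ × ℝ) : c + Complex.polarCoord.symm p = circleMap c p.1 p.2 := by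
    simp [Complex.polarCoord_symm_apply, circleMap, Complex.exp_mul_I]
  have hmeas : Measurable fun p : ℝ × ℝ => F (circleMap c p.1 p.2) :=
    hF.comp (by fun_prop)
  rw [← lintegral_add_left_eq_self F c, ← Complex.lintegral_comp_polarCoord_symm,
    polarCoord_target, Measure.volume_eq_prod, ← Measure.prod_restrict]
  simp_rw [smul_eq_mul, hpolar]
  rw [lintegral_prod (fun p : ℝ × ℝ => ENNReal.ofReal p.1 * F (circleMap c p.1 p.2))
    (measurable_fst.ennreal_ofReal.mul hmeas).aemeasurable]
  refine setLIntegral_congr_fun measurableSet_Ioi fun ρ _ => ?_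
  dsimp only
  exact lintegral_const_mul _ (hF.comp (continuous_circleMap c ρ).measurable)

theorem DiffContOnCl.ofReal_two_pi_mul_enorm_le_lintegral_circleMap {g : ℂ → ℂ} {c : ℂ} {ρ : ℝ}
    (hg : DiffContOnCl ℂ g (ball c |ρ|)) :
    ENNReal.ofReal (2 * π) * ‖g c‖ₑ ≤ ∫⁻ θ in Ioo (-π) π, ‖g (circleMap c ρ θ)‖ₑ := by
  have hmean : (2 * π) • g c = ∫ θ in (-π)..π, g (circleMap c ρ θ) := by
    rw [← hg.circleAverage, circleAverage_eq_integral_add (-π), smul_inv_smul₀ (by positivity),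
      intervalIntegral.integral_comp_add_right (fun θ => g (circleMap c ρ θ))]
    congr 1 <;> ring
  calc ENNReal.ofReal (2 * π) * ‖g c‖ₑ = ‖∫ θ in (-π)..π, g (circleMap c ρ θ)‖ₑ := by
        rw [← hmean, enorm_smul, Real.enorm_of_nonneg (by positivity)]
    _ ≤ ∫⁻ θ in Ioc (-π) π, ‖g (circleMap c ρ θ)‖ₑ := by
        rw [intervalIntegral.integral_of_le (by linarith [pi_pos])]
        exact enorm_integral_le_lintegral_enorm _
    _ = ∫⁻ θ in Ioo (-π) π, ‖g (circleMap c ρ θ)‖ₑ := by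
        rw [restrict_Ioo_eq_restrict_Ioc]

theorem setLIntegral_Ioo_zero_ofReal (R : ℝ) (hR : 0 ≤ R) :
    ∫⁻ ρ in Ioo 0 R, ENNReal.ofReal ρ = ENNReal.ofReal (R ^ 2 / 2) := by
  rw [← ofReal_integral_eq_lintegral_ofReal, ← integral_Ioc_eq_integral_Ioo,
    ← intervalIntegral.integral_of_le hR, integral_id]
  · ring_nf
  · exact (continuous_id.integrableOn_Icc (a := 0) (b := R)).mono_set Ioo_subset_Icc_self
  · exact (ae_restrict_iff' measurableSet_Ioo).2 (Eventually.of_forall fun ρ hρ => hρ.1.le)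

theorem DifferentiableOn.volume_ball_mul_enorm_le_setLIntegral {g : ℂ → ℂ} {c : ℂ} {R : ℝ}
    (hg : DifferentiableOn ℂ g (ball c R)) :
    volume (ball c R) * ‖g c‖ₑ ≤ ∫⁻ w in ball c R, ‖g w‖ₑ := by
  rcases le_or_gt R 0 with hR | hR
  · simp [ball_eq_empty.2 hR]
  classical
  have hmeas : Measurable ((ball c R).indicator fun w => ‖g w‖ₑ) := by
    rw [← piecewise_eq_indicator]
    exact hg.continuousOn.enorm.measurable_piecewise continuousOn_const measurableSet_ball
  have hcircle (ρ : ℝ) (hρ : ρ ∈ Ioo 0 R) :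
      ENNReal.ofReal (2 * π) * ‖g c‖ₑ ≤
        ∫⁻ θ in Ioo (-π) π, (ball c R).indicator (fun w => ‖g w‖ₑ) (circleMap c ρ θ) := by
    have hsub : closedBall c |ρ| ⊆ ball c R :=
      closedBall_subset_ball (by rw [abs_of_pos hρ.1]; exact hρ.2)
    have hmem (θ : ℝ) : circleMap c ρ θ ∈ ball c R :=
      hsub (sphere_subset_closedBall (circleMap_mem_sphere' c ρ θ))
    simp only [indicator_of_mem (hmem _)]
    exact (hg.diffContOnCl_ball hsub).ofReal_two_pi_mul_enorm_le_lintegral_circleMap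
  calc volume (ball c R) * ‖g c‖ₑ
      = ∫⁻ ρ in Ioo 0 R, ENNReal.ofReal ρ * (ENNReal.ofReal (2 * π) * ‖g c‖ₑ) := by
        rw [lintegral_mul_const _ ENNReal.measurable_ofReal, setLIntegral_Ioo_zero_ofReal R hR.le,
          ← mul_assoc, ← ENNReal.ofReal_mul (by positivity), Complex.volume_ball,
          show R ^ 2 / 2 * (2 * π) = R ^ 2 * π by ring, ENNReal.ofReal_mul (by positivity),
          ENNReal.ofReal_pow hR.le, ← NNReal.coe_real_pi, ENNReal.ofReal_coe_nnreal]
    _ ≤ ∫⁻ ρ in Ioo 0 R, ENNReal.ofReal ρ *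
          ∫⁻ θ in Ioo (-π) π, (ball c R).indicator (fun w => ‖g w‖ₑ) (circleMap c ρ θ) :=
        setLIntegral_mono' measurableSet_Ioo fun ρ hρ => by gcongr; exact hcircle ρ hρ
    _ ≤ ∫⁻ ρ in Ioi 0, ENNReal.ofReal ρ *
          ∫⁻ θ in Ioo (-π) π, (ball c R).indicator (fun w => ‖g w‖ₑ) (circleMap c ρ θ) :=
        lintegral_mono_set Ioo_subset_Ioi_self
    _ = ∫⁻ w in ball c R, ‖g w‖ₑ := by
        rw [← lintegral_eq_lintegral_Ioi_mul_lintegral_circleMap hmeas,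
          lintegral_indicator measurableSet_ball]

theorem hasDerivAt_add_one_sub_mul_deriv {f : ℂ → ℂ} {U : Set ℂ} (hf : DifferentiableOn ℂ f U)
    (hU : IsOpen U) {z : ℂ} (hz : z ∈ U) :
    HasDerivAt (fun z => f z + (1 - z) * deriv f z) ((1 - z) * deriv (deriv f) z) z := by
  have hf' : HasDerivAt f (deriv f z) z := (hf.differentiableAt (hU.mem_nhds hz)).hasDerivAt
  have hf'' : HasDerivAt (deriv f) (deriv (deriv f) z) z :=
    ((hf.deriv hU).differentiableAt (hU.mem_nhds hz)).hasDerivAt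
  exact (hf'.fun_add (((hasDerivAt_id' z).const_sub 1).fun_mul hf'')).congr_deriv (by ring)

theorem enorm_sub_le_lintegral_one_sub_mul_deriv_deriv {f : ℂ → ℂ}
    (hf : DifferentiableOn ℂ f (ball 0 1)) {x : ℝ} (hx : x ∈ Ico 0 1) :
    ‖f x + (1 - x) * deriv f x - (f 0 + deriv f 0)‖ₑ ≤
      ∫⁻ t in Ico (0 : ℝ) 1, ‖(1 - (t : ℂ)) * deriv (deriv f) t‖ₑ := by
  set Φ : ℂ → ℂ := fun z => f z + (1 - z) * deriv f z
  have hball {t : ℝ} (ht : t ∈ Icc 0 x) : (t : ℂ) ∈ ball (0 : ℂ) 1 := by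
    rw [mem_ball_zero_iff, norm_real, norm_of_nonneg ht.1]
    exact ht.2.trans_lt hx.2
  have hΦ : ContDiffOn ℝ 1 (Φ ∘ ofRealCLM) (Icc 0 x) := by
    have hd : DifferentiableOn ℂ Φ (ball 0 1) :=
      hf.add ((differentiableOn_const 1 |>.sub differentiableOn_id).mul (hf.deriv isOpen_ball))
    exact ((hd.contDiffOn isOpen_ball).restrict_scalars ℝ).comp_continuousLinearMap ofRealCLM
      |>.mono fun t ht => hball ht
  have hderiv (t : ℝ) (ht : t ∈ Icc 0 x) :
      deriv (Φ ∘ ofRealCLM) t = (1 - (t : ℂ)) * deriv (deriv f) t :=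
    (hasDerivAt_add_one_sub_mul_deriv hf isOpen_ball (hball ht)).comp_ofReal.deriv
  calc ‖f x + (1 - x) * deriv f x - (f 0 + deriv f 0)‖ₑ
      = ‖(Φ ∘ ofRealCLM) x - (Φ ∘ ofRealCLM) 0‖ₑ := by simp [Φ]
    _ ≤ ∫⁻ t in Icc 0 x, ‖deriv (Φ ∘ ofRealCLM) t‖ₑ :=
        enorm_sub_le_lintegral_deriv_of_contDiffOn_Icc hΦ hx.1
    _ = ∫⁻ t in Icc 0 x, ‖(1 - (t : ℂ)) * deriv (deriv f) t‖ₑ :=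
        setLIntegral_congr_fun measurableSet_Icc fun t ht => by rw [hderiv t ht]
    _ ≤ ∫⁻ t in Ico (0 : ℝ) 1, ‖(1 - (t : ℂ)) * deriv (deriv f) t‖ₑ :=
        lintegral_mono_set (Icc_subset_Ico_right hx.2)

theorem one_le_lintegral_one_sub_mul_deriv_deriv {f : ℂ → ℂ}
    (hf : DifferentiableOn ℂ f (ball 0 1)) (hf0 : f 0 = 0) (hf'0 : deriv f 0 = 0)
    (hlim : Tendsto (fun ε : ℝ => f (1 - (ε : ℂ))) (𝓝[>] 0) (𝓝 1))
    (hlim' : Tendsto (fun ε : ℝ => (ε : ℂ) * deriv f (1 - (ε : ℂ))) (𝓝[>] 0) (𝓝 0)) :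
    1 ≤ ∫⁻ t in Ico (0 : ℝ) 1, ‖(1 - (t : ℂ)) * deriv (deriv f) t‖ₑ := by
  have htendsto : Tendsto (fun ε : ℝ => ‖f (1 - (ε : ℂ)) + ε * deriv f (1 - (ε : ℂ))‖ₑ)
      (𝓝[>] 0) (𝓝 1) := by
    simpa using (hlim.add hlim').enorm
  refine le_of_tendsto htendsto ?_
  filter_upwards [Ioo_mem_nhdsGT (zero_lt_one' ℝ)] with ε hε
  have hx : 1 - ε ∈ Ico (0 : ℝ) 1 := ⟨by linarith [hε.2], by linarith [hε.1]⟩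
  simpa [hf0, hf'0] using enorm_sub_le_lintegral_one_sub_mul_deriv_deriv hf hx

theorem lintegral_lintegral_mul_le_of_lintegral_le {α β : Type*} [MeasurableSpace α]
    [MeasurableSpace β] {μ : Measure α} {ν : Measure β} [SFinite μ] [SFinite ν]
    {K : α → β → ℝ≥0∞} {G : β → ℝ≥0∞} {C : ℝ≥0∞} (hK : Measurable (Function.uncurry K))
    (hG : AEMeasurable G ν) (hC : ∀ y, ∫⁻ x, K x y ∂μ ≤ C) :
    ∫⁻ x, ∫⁻ y, K x y * G y ∂ν ∂μ ≤ C * ∫⁻ y, G y ∂ν := by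
  have hG' : AEMeasurable (fun p : α × β => G p.2) (μ.prod ν) :=
    hG.comp_quasiMeasurePreserving Measure.quasiMeasurePreserving_snd
  rw [lintegral_lintegral_swap (hK.aemeasurable.mul hG'), ← lintegral_const_mul'' C hG]
  refine lintegral_mono fun y => ?_
  rw [lintegral_mul_const _ hK.of_uncurry_right]
  gcongr
  exact hC y

theorem ball_subset_Omega {r x : ℝ} (hx : x ∈ Ico 0 1) :
    ball (x : ℂ) ((1 - x) * r) ⊆ Omega r := by
  intro w hw
  have hx1 : 0 < 1 - x := by linarith [hx.2]
  have hnorm : ‖(1 : ℂ) - x‖ = 1 - x := by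
    rw [← ofReal_one, ← ofReal_sub, norm_real, norm_of_nonneg hx1.le]
  have hne : (1 : ℂ) - x ≠ 0 := by
    rw [← norm_ne_zero_iff, hnorm]; exact hx1.ne'
  refine Or.inr (mem_iUnion₂.2 ⟨(w - x) / (1 - x), ?_, 1 - x, x, hx1.le, hx.1, by ring, ?_⟩)
  · rw [mem_ofPred_eq, norm_div, hnorm, div_le_iff₀ hx1, mul_comm, ← dist_eq_norm]
    exact (mem_ball.1 hw).le
  · simp only [real_smul, ofReal_sub, ofReal_one]
    field_simp
    ring

theorem ball_subset_ball_zero_one {r x : ℝ} (hx : x ∈ Ico 0 1) (hr : r ≤ 1) :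
    ball (x : ℂ) ((1 - x) * r) ⊆ ball 0 1 := by
  intro w hw
  rw [mem_ball_zero_iff]
  calc ‖w‖ ≤ dist w x + ‖(x : ℂ)‖ := by rw [dist_eq_norm]; exact norm_le_norm_sub_add w x
    _ < (1 - x) * r + x := by
        rw [norm_real, norm_of_nonneg hx.1]; exact add_lt_add_of_lt_of_le hw le_rfl
    _ ≤ 1 := by nlinarith [hx.2]

/-- For fixed `x`, `ballKernel r x` is `1 - x` times the uniform probability density on the disc
`ball x ((1 - x) r)`. -/
noncomputable def ballKernel (r x : ℝ) (w : ℂ) : ℝ≥0∞ :=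
  (ball (x : ℂ) ((1 - x) * r)).indicator (fun _ => ENNReal.ofReal ((π * (1 - x) * r ^ 2)⁻¹)) w

theorem measurable_ballKernel (r : ℝ) : Measurable (Function.uncurry (ballKernel r)) := by
  have hE : MeasurableSet {p : ℝ × ℂ | dist p.2 (p.1 : ℂ) < (1 - p.1) * r} :=
    (isOpen_lt (by fun_prop) (by fun_prop)).measurableSet
  exact (Measurable.ennreal_ofReal (by fun_prop)).indicator hE

theorem enorm_one_sub_mul_le_setLIntegral_ballKernel {g : ℂ → ℂ}
    (hg : DifferentiableOn ℂ g (ball 0 1)) {r x : ℝ} (hr : 0 < r) (hr1 : r ≤ 1)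
    (hx : x ∈ Ico 0 1) :
    ‖(1 - (x : ℂ)) * g x‖ₑ ≤ ∫⁻ w in Omega r ∩ ball 0 1, ballKernel r x w * ‖g w‖ₑ := by
  set B := ball (x : ℂ) ((1 - x) * r)
  set a := ENNReal.ofReal ((π * (1 - x) * r ^ 2)⁻¹)
  have hx1 : 0 < 1 - x := by linarith [hx.2]
  have hB : B ⊆ Omega r ∩ ball 0 1 :=
    subset_inter (ball_subset_Omega hx) (ball_subset_ball_zero_one hx hr1)
  have hvol : a * volume B = ‖1 - (x : ℂ)‖ₑ := by
    rw [← ofReal_norm, ← Complex.ofReal_one, ← Complex.ofReal_sub, norm_real,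
      norm_of_nonneg hx1.le, Complex.volume_ball, ← ENNReal.ofReal_pow (by positivity),
      ← ENNReal.ofReal_coe_nnreal, NNReal.coe_real_pi,
      ← ENNReal.ofReal_mul (by positivity), ← ENNReal.ofReal_mul (by positivity)]
    congr 1
    field_simp
  calc ‖(1 - (x : ℂ)) * g x‖ₑ = a * (volume B * ‖g x‖ₑ) := by rw [enorm_mul, ← mul_assoc, hvol]
    _ ≤ a * ∫⁻ w in B, ‖g w‖ₑ := by
        gcongr
        exact (hg.mono (hB.trans inter_subset_right)).volume_ball_mul_enorm_le_setLIntegral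
    _ = ∫⁻ w in B, a * ‖g w‖ₑ := (lintegral_const_mul' a _ ENNReal.ofReal_ne_top).symm
    _ = ∫⁻ w in Omega r ∩ ball 0 1, B.indicator (fun w => a * ‖g w‖ₑ) w := by
        rw [lintegral_indicator measurableSet_ball, Measure.restrict_restrict measurableSet_ball,
          inter_eq_left.2 hB]
    _ = ∫⁻ w in Omega r ∩ ball 0 1, ballKernel r x w * ‖g w‖ₑ :=
        lintegral_congr fun w => indicator_mul_left _ _ _

theorem one_sub_re_bounds_of_mem_ball {r x : ℝ} {w : ℂ} (hx : x < 1) (hr : r ≤ 1 / 2)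
    (hw : w ∈ ball (x : ℂ) ((1 - x) * r)) :
    0 < 1 - w.re ∧ 2 * (1 - w.re) ≤ 3 * (1 - x) ∧ |x - w.re| < 2 * (1 - w.re) * r := by
  have h : |x - w.re| < (1 - x) * r := by
    calc |x - w.re| = |(w - x).re| := by rw [abs_sub_comm]; simp
      _ ≤ ‖w - x‖ := abs_re_le_norm _
      _ < (1 - x) * r := by rw [← dist_eq_norm]; exact hw
  have hr0 : 0 < r := pos_of_mul_pos_right ((abs_nonneg _).trans_lt h) (by linarith)
  have hxr : (1 - x) * r ≤ (1 - x) / 2 := by nlinarith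
  rw [abs_lt] at h ⊢
  refine ⟨by linarith, by linarith, by nlinarith, by nlinarith⟩

theorem lintegral_ballKernel_le {r : ℝ} (hr : 0 < r) (hr2 : r ≤ 1 / 2) (w : ℂ) :
    ∫⁻ x in Ico 0 1, ballKernel r x w ≤ ENNReal.ofReal (6 / (π * r)) := by
  set u := w.re
  set I := Ioo (u - 2 * (1 - u) * r) (u + 2 * (1 - u) * r)
  set C := ENNReal.ofReal (3 / (2 * π * (1 - u) * r ^ 2))
  have hpt (x : ℝ) (hx : x ∈ Ico 0 1) : ballKernel r x w ≤ I.indicator (fun _ => C) x := by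
    by_cases hw : w ∈ ball (x : ℂ) ((1 - x) * r)
    · have hx1 : 0 < 1 - x := by linarith [hx.2]
      obtain ⟨hu, h23, habs⟩ := one_sub_re_bounds_of_mem_ball hx.2 hr2 hw
      have hxI : x ∈ I := by rw [abs_lt] at habs; constructor <;> linarith
      rw [ballKernel, indicator_of_mem hw, indicator_of_mem hxI]
      apply ENNReal.ofReal_le_ofReal
      rw [inv_eq_one_div, div_le_div_iff₀ (by positivity) (by positivity)]
      nlinarith [pi_pos, mul_le_mul_of_nonneg_right h23 (by positivity : 0 ≤ π * r ^ 2)]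
    · rw [ballKernel, indicator_of_notMem hw]
      exact zero_le
  calc ∫⁻ x in Ico 0 1, ballKernel r x w ≤ ∫⁻ x in Ico 0 1, I.indicator (fun _ => C) x :=
        setLIntegral_mono' measurableSet_Ico hpt
    _ ≤ ∫⁻ x, I.indicator (fun _ => C) x := setLIntegral_le_lintegral _ _
    _ = C * volume I := lintegral_indicator_const measurableSet_Ioo C
    _ ≤ ENNReal.ofReal (6 / (π * r)) := by
        rw [Real.volume_Ioo]
        rcases le_or_gt (1 - u) 0 with hu | hu
        · rw [ENNReal.ofReal_of_nonpos (by nlinarith), mul_zero]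
          exact zero_le
        · rw [← ENNReal.ofReal_mul (by positivity)]
          apply le_of_eq
          congr 1
          field_simp
          ring

theorem lintegral_one_sub_mul_le_setLIntegral_Omega {g : ℂ → ℂ}
    (hg : DifferentiableOn ℂ g (ball 0 1)) {r : ℝ} (hr : 0 < r) (hr2 : r ≤ 1 / 2) :
    ∫⁻ x in Ico (0 : ℝ) 1, ‖(1 - (x : ℂ)) * g x‖ₑ ≤
      ENNReal.ofReal (6 / (π * r)) * ∫⁻ w in Omega r ∩ ball 0 1, ‖g w‖ₑ := by
  have hG : AEMeasurable (fun w => ‖g w‖ₑ) (volume.restrict (Omega r ∩ ball 0 1)) :=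
    (hg.continuousOn.enorm.aemeasurable measurableSet_ball).mono_set inter_subset_right
  calc ∫⁻ x in Ico (0 : ℝ) 1, ‖(1 - (x : ℂ)) * g x‖ₑ
      ≤ ∫⁻ x in Ico (0 : ℝ) 1, ∫⁻ w in Omega r ∩ ball 0 1, ballKernel r x w * ‖g w‖ₑ :=
        setLIntegral_mono' measurableSet_Ico fun x hx =>
          enorm_one_sub_mul_le_setLIntegral_ballKernel hg hr (by linarith) hx
    _ ≤ _ := lintegral_lintegral_mul_le_of_lintegral_le (measurable_ballKernel r) hG
          (lintegral_ballKernel_le hr hr2)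

theorem setLIntegral_dA (s : Set ℂ) (F : ℂ → ℝ≥0∞) :
    ∫⁻ z in s, F z ∂dA = (ENNReal.ofReal π)⁻¹ * ∫⁻ z in s ∩ ball 0 1, F z := by
  rw [dA, Measure.restrict_smul, lintegral_smul_measure, smul_eq_mul,
    Measure.restrict_restrict' measurableSet_ball]

theorem stmt4 : ∃ c : ℝ, 0 < c ∧
    ∀ f : ℂ → ℂ, DifferentiableOn ℂ f (ball (0:ℂ) 1) →
      f 0 = 0 → deriv f 0 = 0 →
      Tendsto (fun ε : ℝ => f (1 - (ε:ℂ))) (nhdsWithin 0 (Set.Ioi 0)) (nhds 1) →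
      Tendsto (fun ε : ℝ => (ε:ℂ) * deriv f (1 - (ε:ℂ))) (nhdsWithin 0 (Set.Ioi 0)) (nhds 0) →
      ∀ r : ℝ, 0 < r → r ≤ 1/2 →
        ENNReal.ofReal (c * r) ≤
          ∫⁻ z in Omega r, ENNReal.ofReal (‖deriv (deriv f) z‖) ∂dA := by
  refine ⟨1 / 6, by norm_num, fun f hf hf0 hf'0 hlim hlim' r hr hr2 => ?_⟩
  have hweighted := one_le_lintegral_one_sub_mul_deriv_deriv hf hf0 hf'0 hlim hlim'
  have harea := lintegral_one_sub_mul_le_setLIntegral_Omega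
    ((hf.deriv isOpen_ball).deriv isOpen_ball) hr hr2
  simp only [ofReal_norm, setLIntegral_dA]
  calc ENNReal.ofReal (1 / 6 * r)
      ≤ ENNReal.ofReal (1 / 6 * r) * (ENNReal.ofReal (6 / (π * r)) *
          ∫⁻ z in Omega r ∩ ball 0 1, ‖deriv (deriv f) z‖ₑ) :=
        le_mul_of_one_le_right' (hweighted.trans harea)
    _ = (ENNReal.ofReal π)⁻¹ * ∫⁻ z in Omega r ∩ ball 0 1, ‖deriv (deriv f) z‖ₑ := by
        rw [← mul_assoc, ← ENNReal.ofReal_mul (by positivity), ← ENNReal.ofReal_inv_of_pos pi_pos]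
        congr 2
        field_simp
end

section
/- Let (f_n) be a sequence of analytic functions on 𝔻 with ∫_𝔻 |f_n''(z)| dA(z) = 1 for every n, and suppose f_n → 0 uniformly on every compact subset of 𝔻. Then there exist a measurable function h : 𝔻 → ℂ with |h(z)| ≤ 1 for all z, and a subsequence (f_{k_n}), such that |∫_𝔻 f_{k_n}''(z)·h(z) dA(z)| ≥ 7/10 for every n. -/
/-!
Gliding hump. Put `g_n = f_n''`. Since `f_n → 0` locally uniformly, so does `g_n`, hence the
`dA`-mass of `g_n` on a fixed disc `|z| ≤ r < 1` tends to `0`, while for fixed `n` its mass on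
`|z| ≤ ρ` tends to `1` as `ρ → 1`. Alternating the two limits gives radii `r_0 < r_1 < ⋯` and
indices `k_0 < k_1 < ⋯` such that `g_{k_n}` has mass `> 9/10` on the annulus
`A_n = {r_n < |z| ≤ r_{n+1}}`. The annuli are disjoint, so a single `h` equal to
`exp (-i arg g_{k_n})` on every `A_n` serves all `n` at once:
`|∫ g_{k_n} h dA| ≥ ∫_{A_n} |g_{k_n}| - ∫_{A_nᶜ} |g_{k_n}| > 9/10 - 1/10`.
-/

open MeasureTheory Metric Complex Filter

open Function
open scoped Topology

instance : IsProbabilityMeasure dA := by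
  refine ⟨?_⟩
  simp only [dA, Measure.smul_apply, Measure.restrict_apply MeasurableSet.univ, Set.univ_inter,
    Complex.volume_ball, smul_eq_mul, ENNReal.ofReal_one, one_pow, one_mul,
    ← ENNReal.ofReal_coe_nnreal, NNReal.coe_real_pi]
  exact ENNReal.inv_mul_cancel (by simp [Real.pi_pos]) ENNReal.ofReal_ne_top

theorem dA_restrict_ball : dA.restrict (ball (0:ℂ) 1) = dA := by
  simp [dA, Measure.restrict_smul, Measure.restrict_restrict measurableSet_ball]

theorem TendstoLocallyUniformlyOn.iteratedDeriv {ι E : Type*} [NormedAddCommGroup E]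
    [NormedSpace ℂ E] [CompleteSpace E] {l : Filter ι} {F : ι → ℂ → E} {f : ℂ → E}
    {U : Set ℂ} (hf : TendstoLocallyUniformlyOn F f l U)
    (hF : ∀ᶠ n in l, DifferentiableOn ℂ (F n) U) (hU : IsOpen U) (m : ℕ) :
    TendstoLocallyUniformlyOn (fun n => iteratedDeriv m (F n)) (iteratedDeriv m f) l U := by
  induction m with
  | zero => simpa using hf
  | succ m ih =>
    simp only [iteratedDeriv_succ]
    refine ih.deriv ?_ hU
    filter_upwards [hF] with n hn
    rw [iteratedDeriv_eq_iterate]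
    exact ((hn.analyticOnNhd hU).iterated_deriv m).differentiableOn

theorem tendsto_setIntegral_norm_of_tendstoUniformlyOn {α ι E : Type*} [MeasurableSpace α]
    [NormedAddCommGroup E] {μ : Measure α} [IsFiniteMeasure μ] {l : Filter ι}
    {F : ι → α → E} {s : Set α} (hF : TendstoUniformlyOn F 0 l s) :
    Tendsto (fun n => ∫ x in s, ‖F n x‖ ∂μ) l (𝓝 0) := by
  rw [Metric.tendsto_nhds]
  intro ε hε
  have hδ : 0 < ε / (μ.real s + 1) := by positivity
  filter_upwards [Metric.tendstoUniformlyOn_iff.mp hF _ hδ] with n hn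
  have hbound : ∀ x ∈ s, ‖‖F n x‖‖ ≤ ε / (μ.real s + 1) := fun x hx => by
    simpa using (hn x hx).le
  calc dist (∫ x in s, ‖F n x‖ ∂μ) 0 = ‖∫ x in s, ‖F n x‖ ∂μ‖ := dist_zero_right _
    _ ≤ ε / (μ.real s + 1) * μ.real s :=
        norm_setIntegral_le_of_norm_le_const (measure_lt_top μ s) hbound
    _ < ε := by
        rw [div_mul_eq_mul_div, div_lt_iff₀ (by positivity)]
        nlinarith [measureReal_nonneg (μ := μ) (s := s)]

theorem tendsto_setIntegral_closedBall_nhdsLT {α E : Type*} [PseudoMetricSpace α]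
    [MeasurableSpace α] [OpensMeasurableSpace α] [NormedAddCommGroup E] [NormedSpace ℝ E]
    {μ : Measure α} {f : α → E} (hf : Integrable f μ) (x : α) (R : ℝ) :
    Tendsto (fun ρ => ∫ z in closedBall x ρ, f z ∂μ) (𝓝[<] R) (𝓝 (∫ z in ball x R, f z ∂μ)) := by
  simp only [← integral_indicator measurableSet_closedBall,
    ← integral_indicator measurableSet_ball]
  refine tendsto_integral_filter_of_dominated_convergence (fun z => ‖f z‖)
    (Eventually.of_forall fun ρ => hf.aestronglyMeasurable.indicator measurableSet_closedBall)
    (Eventually.of_forall fun ρ => Eventually.of_forall fun z => norm_indicator_le_norm_self _ _)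
    hf.norm (Eventually.of_forall fun z => tendsto_const_nhds.congr' ?_)
  by_cases hz : dist z x < R
  · filter_upwards [Ioo_mem_nhdsLT hz] with ρ hρ
    rw [Set.indicator_of_mem (mem_ball.mpr hz), Set.indicator_of_mem (mem_closedBall.mpr hρ.1.le)]
  · filter_upwards [self_mem_nhdsWithin] with ρ hρ
    rw [Set.indicator_of_notMem (fun h => hz (mem_ball.mp h)),
      Set.indicator_of_notMem fun h => hz ((mem_closedBall.mp h).trans_lt hρ)]

theorem exists_gliding_hump (a : ℕ → ℝ → ℝ) {ε : ℝ} (hε : 0 < ε)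
    (h_small : ∀ ρ < 1, Tendsto (fun n => a n ρ) atTop (𝓝 0))
    (h_big : ∀ n, Tendsto (a n) (𝓝[<] 1) (𝓝 1)) :
    ∃ (r : ℕ → ℝ) (k : ℕ → ℕ), StrictMono r ∧ StrictMono k ∧
      ∀ n, a (k n) (r n) < ε ∧ 1 - ε < a (k n) (r (n + 1)) := by
  have step : ∀ p : ℝ × ℕ, p.1 < 1 → ∃ q : ℝ × ℕ, p.1 < q.1 ∧ q.1 < 1 ∧ p.2 < q.2 ∧
      a q.2 p.1 < ε ∧ 1 - ε < a q.2 q.1 := by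
    rintro ⟨ρ, N⟩ hρ
    obtain ⟨k, hkN, hk⟩ :=
      ((eventually_gt_atTop N).and ((h_small ρ hρ).eventually (gt_mem_nhds hε))).exists
    have h_near : ∀ᶠ ρ' in 𝓝[<] (1:ℝ), ρ' ∈ Set.Ioo ρ 1 := Ioo_mem_nhdsLT hρ
    obtain ⟨ρ', hρ', hk'⟩ :=
      (h_near.and ((h_big k).eventually (lt_mem_nhds (by linarith : 1 - ε < 1)))).exists
    exact ⟨(ρ', k), hρ'.1, hρ'.2, hkN, hk, hk'⟩
  choose! next hnext using step
  set p : ℕ → ℝ × ℕ := fun n => next^[n] (0, 0) with hp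
  have hp_succ : ∀ n, p (n + 1) = next (p n) := fun n => iterate_succ_apply' _ _ _
  have hp_lt_one : ∀ n, (p n).1 < 1 := by
    intro n
    induction n with
    | zero => simp [hp]
    | succ n ih => rw [hp_succ]; exact (hnext _ ih).2.1
  refine ⟨fun n => (p n).1, fun n => (p (n + 1)).2, strictMono_nat_of_lt_succ fun n => ?_,
    strictMono_nat_of_lt_succ fun n => ?_, fun n => ?_⟩
  · rw [hp_succ]; exact (hnext _ (hp_lt_one n)).1
  · rw [hp_succ (n + 1)]; exact (hnext _ (hp_lt_one _)).2.2.1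
  · simp only [hp_succ]; exact (hnext _ (hp_lt_one n)).2.2.2

theorem pairwise_disjoint_closedBall_sdiff {α : Type*} [PseudoMetricSpace α] {r : ℕ → ℝ}
    (hr : Monotone r) (x : α) :
    Pairwise (Disjoint on fun n => closedBall x (r (n + 1)) \ closedBall x (r n)) := by
  have hIoc : ∀ n, closedBall x (r (n + 1)) \ closedBall x (r n) =
      (dist · x) ⁻¹' Set.Ioc (r n) (r (n + 1)) := fun n => by
    rw [← Set.Iic_sdiff_Iic, Set.preimage_sdiff]; rfl
  intro m n hmn
  simp only [onFun, hIoc]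
  exact (hr.pairwise_disjoint_on_Ioc_succ hmn).preimage _

theorem exists_measurable_norm_le_eqOn {α E : Type*} [MeasurableSpace α]
    [NormedAddCommGroup E] [MeasurableSpace E] {A : ℕ → Set α} (hA : ∀ n, MeasurableSet (A n))
    (hdisj : Pairwise (Disjoint on A)) {u : ℕ → α → E} (hu : ∀ n, Measurable (u n)) {C : ℝ}
    (hC : 0 ≤ C) (hu_le : ∀ n x, ‖u n x‖ ≤ C) :
    ∃ h : α → E, Measurable h ∧ (∀ x, ‖h x‖ ≤ C) ∧ ∀ n, Set.EqOn h (u n) (A n) := by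
  let t : Option ℕ → Set α := fun i => i.elim (⋃ n, A n)ᶜ A
  let g : Option ℕ → α → E := fun i => i.elim 0 u
  have ht : Pairwise (Disjoint on t) := by
    rintro (_ | m) (_ | n) hmn
    · exact absurd rfl hmn
    · exact disjoint_compl_left.mono_right (Set.subset_iUnion A n)
    · exact disjoint_compl_left.mono_right (Set.subset_iUnion A m) |>.symm
    · exact hdisj (fun h => hmn (congrArg some h))
  obtain ⟨h, hh, hhg⟩ := exists_measurable_piecewise t
    (fun i => i.rec (MeasurableSet.iUnion hA).compl hA) g (fun i => i.rec measurable_const hu)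
    fun i j hij x hx => (Set.disjoint_left.mp (ht hij) hx.1 hx.2).elim
  refine ⟨h, hh, fun x => ?_, fun n => hhg (some n)⟩
  by_cases hx : ∃ n, x ∈ A n
  · obtain ⟨n, hn⟩ := hx
    rw [hhg (some n) hn]
    exact hu_le n x
  · rw [hhg none (by simpa [t] using hx)]
    simpa [g] using hC

theorem exists_strictMono_setIntegral_annulus_gt {μ : Measure ℂ} [IsFiniteMeasure μ]
    (hμ : μ.restrict (ball 0 1) = μ) {G : ℕ → ℂ → ℂ} (hG_int : ∀ n, Integrable (G n) μ)
    (hG_total : ∀ n, ∫ z, ‖G n z‖ ∂μ = 1)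
    (hG_lim : TendstoLocallyUniformlyOn G 0 atTop (ball 0 1)) {ε : ℝ} (hε : 0 < ε) :
    ∃ (r : ℕ → ℝ) (k : ℕ → ℕ), StrictMono r ∧ StrictMono k ∧
      ∀ n, 1 - 2 * ε < ∫ z in closedBall 0 (r (n + 1)) \ closedBall 0 (r n), ‖G (k n) z‖ ∂μ := by
  obtain ⟨r, k, hr, hk, h_hump⟩ :=
    exists_gliding_hump (fun n ρ => ∫ z in closedBall 0 ρ, ‖G n z‖ ∂μ) hε
      (fun ρ hρ => tendsto_setIntegral_norm_of_tendstoUniformlyOn <|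
        (tendstoLocallyUniformlyOn_iff_forall_isCompact isOpen_ball).mp hG_lim _
          (closedBall_subset_ball hρ) (isCompact_closedBall 0 ρ))
      (fun n => by
        simpa [hμ, hG_total] using tendsto_setIntegral_closedBall_nhdsLT (hG_int n).norm 0 1)
  refine ⟨r, k, hr, hk, fun n => ?_⟩
  rw [setIntegral_sdiff measurableSet_closedBall (hG_int (k n)).norm.integrableOn
    (closedBall_subset_closedBall (hr.monotone (Nat.le_succ n)))]
  linarith [h_hump n]

theorem two_mul_setIntegral_norm_sub_le_norm_integral_mul {α 𝕜 : Type*} [MeasurableSpace α]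
    [RCLike 𝕜] {μ : Measure α} {K h : α → 𝕜} {s : Set α} (hK : Integrable K μ)
    (hh : AEStronglyMeasurable h μ) (hh_le : ∀ x, ‖h x‖ ≤ 1) (hs : MeasurableSet s)
    (hKh : ∀ x ∈ s, K x * h x = ‖K x‖) :
    2 * ∫ x in s, ‖K x‖ ∂μ - ∫ x, ‖K x‖ ∂μ ≤ ‖∫ x, K x * h x ∂μ‖ := by
  have hKh_int : Integrable (fun x => K x * h x) μ :=
    hK.mul_bdd hh (Eventually.of_forall hh_le)
  have h_on : ∫ x in s, K x * h x ∂μ = ((∫ x in s, ‖K x‖ ∂μ : ℝ) : 𝕜) := by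
    rw [setIntegral_congr_fun hs hKh, integral_ofReal]
  have h_off : ‖∫ x in sᶜ, K x * h x ∂μ‖ ≤ ∫ x in sᶜ, ‖K x‖ ∂μ := by
    refine norm_integral_le_of_norm_le hK.norm.restrict (Eventually.of_forall fun x => ?_)
    rw [norm_mul]
    exact mul_le_of_le_one_right (norm_nonneg _) (hh_le x)
  calc 2 * ∫ x in s, ‖K x‖ ∂μ - ∫ x, ‖K x‖ ∂μ
      = ‖∫ x in s, K x * h x ∂μ‖ - ∫ x in sᶜ, ‖K x‖ ∂μ := by
        rw [h_on, RCLike.norm_ofReal,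
          abs_of_nonneg (setIntegral_nonneg hs fun _ _ => norm_nonneg _),
          ← integral_add_compl hs hK.norm]
        ring
    _ ≤ ‖∫ x in s, K x * h x ∂μ‖ - ‖∫ x in sᶜ, K x * h x ∂μ‖ := by linarith
    _ ≤ ‖∫ x in s, K x * h x ∂μ + ∫ x in sᶜ, K x * h x ∂μ‖ := norm_sub_le_norm_add _ _
    _ = ‖∫ x, K x * h x ∂μ‖ := by rw [integral_add_compl hs hKh_int]

theorem mul_exp_neg_arg_mul_I (w : ℂ) : w * exp (↑(-arg w) * I) = ‖w‖ := by
  conv_lhs => rw [← norm_mul_exp_arg_mul_I w]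
  rw [mul_assoc, ← Complex.exp_add]
  simp

theorem stmt10 (f : ℕ → ℂ → ℂ)
    (hf : ∀ n, DifferentiableOn ℂ (f n) (ball (0:ℂ) 1))
    (hnorm : ∀ n, (∫⁻ z, ENNReal.ofReal ‖deriv (deriv (f n)) z‖ ∂dA) = 1)
    (hunif : ∀ K : Set ℂ, K ⊆ ball (0:ℂ) 1 → IsCompact K →
      TendstoUniformlyOn f 0 atTop K) :
    ∃ (h : ℂ → ℂ) (k : ℕ → ℕ), Measurable h ∧ (∀ z, ‖h z‖ ≤ 1) ∧
      StrictMono k ∧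
      ∀ n, (7:ℝ)/10 ≤ ‖∫ z, deriv (deriv (f (k n))) z * h z ∂dA‖ := by
  set G : ℕ → ℂ → ℂ := fun n => deriv (deriv (f n))
  have hG_norm (n : ℕ) : ∫⁻ z, ENNReal.ofReal ‖G n z‖ ∂dA = 1 := hnorm n
  have hG_meas (n : ℕ) : Measurable (G n) := measurable_deriv _
  have hG_int (n : ℕ) : Integrable (G n) dA :=
    ⟨(hG_meas n).aestronglyMeasurable,
      (hasFiniteIntegral_iff_norm _).mpr ((hG_norm n).trans_lt ENNReal.one_lt_top)⟩
  have hG_total (n : ℕ) : ∫ z, ‖G n z‖ ∂dA = 1 := by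
    simp [integral_norm_eq_lintegral_enorm (hG_meas n).aestronglyMeasurable, ← ofReal_norm,
      hG_norm]
  have hG_lim : TendstoLocallyUniformlyOn G 0 atTop (ball (0:ℂ) 1) := by
    simpa [iteratedDeriv_succ] using
      ((tendstoLocallyUniformlyOn_iff_forall_isCompact isOpen_ball).mpr hunif).iteratedDeriv
        (Eventually.of_forall hf) isOpen_ball 2
  obtain ⟨r, k, hr, hk, h_mass⟩ := exists_strictMono_setIntegral_annulus_gt dA_restrict_ball
    hG_int hG_total hG_lim (ε := 1/20) (by norm_num)
  obtain ⟨h, hh_meas, hh_le, hh_eq⟩ := exists_measurable_norm_le_eqOn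
    (fun n => measurableSet_closedBall.diff measurableSet_closedBall)
    (pairwise_disjoint_closedBall_sdiff hr.monotone 0)
    (u := fun n z => exp (↑(-arg (G (k n) z)) * I))
    (fun n => by fun_prop) zero_le_one (fun n z => (norm_exp_ofReal_mul_I _).le)
  refine ⟨h, k, hh_meas, hh_le, hk, fun n => ?_⟩
  calc (7:ℝ)/10 ≤ 2 * ∫ z in closedBall 0 (r (n + 1)) \ closedBall 0 (r n), ‖G (k n) z‖ ∂dA
        - ∫ z, ‖G (k n) z‖ ∂dA := by
        linarith [h_mass n, hG_total (k n)]
    _ ≤ _ := two_mul_setIntegral_norm_sub_le_norm_integral_mul (hG_int (k n))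
        hh_meas.aestronglyMeasurable hh_le (measurableSet_closedBall.diff measurableSet_closedBall)
        fun z hz => by rw [hh_eq n hz]; exact mul_exp_neg_arg_mul_I _
end

section
/- Let f be analytic on 𝔻 with ∫_𝔻 |f''(α)| dA(α) < ∞. Then for every z ∈ 𝔻: f(z) = f(0) + f'(0)·z − ∫_𝔻 (φ_α(z)/conj(α))·f''(α) dA(α), where the integrand is defined for α ≠ 0. -/
/-
In polar coordinates `α = r e^{iθ}` the integral splits into circle averages. On `|α| = r` one has
`conj α = r² / α`, so `φ_α(z) / conj α` is `α / (α - r² z)` times a polynomial in `α`, and the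
Cauchy formula evaluates the circle average of the integrand as `z² (r² - 1) f''(r² z)`. After the
substitution `s = r²`, the radial integral `∫₀¹ z² (s - 1) f''(s z) ds` is Taylor's formula with
integral remainder for `f` along the segment `[0, z]`. Integrability comes from `|φ_α(z)| ≤ 1`:
the kernel is bounded by `1/|α|`, which is integrable near `0`, where `f''` is bounded.
-/

open MeasureTheory Metric Complex

open Set Real ComplexConjugate

section PolarCoord

variable {E : Type*} [NormedAddCommGroup E] [NormedSpace ℝ E]

theorem Complex.slitPlane_ae_eq_univ : (slitPlane : Set ℂ) =ᵐ[volume] univ :=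
  Complex.volume_preserving_equiv_real_prod.quasiMeasurePreserving.preimage_ae_eq
    polarCoord_source_ae_eq_univ

theorem Complex.polarCoord_symm_image (s : Set (ℝ × ℝ)) :
    Complex.polarCoord.symm '' s = measurableEquivRealProd.symm '' (polarCoord.symm '' s) := by
  rw [← image_comp]; rfl

theorem Complex.setIntegral_polarCoord_symm_image {s : Set (ℝ × ℝ)} (hs : MeasurableSet s)
    (hst : s ⊆ polarCoord.target) (h : ℂ → E) :
    ∫ x in Complex.polarCoord.symm '' s, h x = ∫ p in s, p.1 • h (Complex.polarCoord.symm p) := by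
  rw [Complex.polarCoord_symm_image, volume_preserving_equiv_real_prod.symm.setIntegral_image_emb
      measurableEquivRealProd.symm.measurableEmbedding,
    integral_image_eq_integral_abs_det_fderiv_smul volume hs
      (fun p _ ↦ (hasFDerivAt_polarCoord_symm p).hasFDerivWithinAt)
      (polarCoord.symm.injOn.mono hst)]
  refine setIntegral_congr_fun hs fun p hp ↦ ?_
  rw [det_fderivPolarCoordSymm, abs_of_pos (hst hp).1]
  rfl

theorem Complex.integrableOn_polarCoord_symm_image_iff {s : Set (ℝ × ℝ)} (hs : MeasurableSet s)
    (hst : s ⊆ polarCoord.target) (h : ℂ → E) :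
    IntegrableOn h (Complex.polarCoord.symm '' s) ↔
      IntegrableOn (fun p ↦ p.1 • h (Complex.polarCoord.symm p)) s := by
  rw [Complex.polarCoord_symm_image, volume_preserving_equiv_real_prod.symm.integrableOn_image
      measurableEquivRealProd.symm.measurableEmbedding,
    integrableOn_image_iff_integrableOn_abs_det_fderiv_smul volume hs
      (fun p _ ↦ (hasFDerivAt_polarCoord_symm p).hasFDerivWithinAt)
      (polarCoord.symm.injOn.mono hst)]
  refine integrableOn_congr_fun (fun p hp ↦ ?_) hs
  rw [det_fderivPolarCoordSymm, abs_of_pos (hst hp).1]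
  rfl

theorem Complex.polarCoord_symm_image_Ioo_prod (R : ℝ) :
    Complex.polarCoord.symm '' (Ioo 0 R ×ˢ Ioo (-π) π) = slitPlane ∩ ball 0 R := by
  rw [Complex.polarCoord.symm_image_eq_source_inter_preimage
    (prod_mono Ioo_subset_Ioi_self subset_rfl)]
  ext z
  simp only [Complex.polarCoord_source, mem_inter_iff, mem_preimage, Complex.polarCoord_apply,
    mem_prod, mem_Ioo, mem_ball_zero_iff, mem_slitPlane_iff_arg]
  constructor
  · rintro ⟨⟨hπ, h0⟩, ⟨-, hR⟩, -⟩
    exact ⟨⟨hπ, h0⟩, hR⟩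
  · rintro ⟨⟨hπ, h0⟩, hR⟩
    exact ⟨⟨hπ, h0⟩, ⟨norm_pos_iff.2 h0, hR⟩, neg_pi_lt_arg z, lt_of_le_of_ne (arg_le_pi z) hπ⟩

theorem Complex.polarCoord_symm_eq_circleMap (r θ : ℝ) :
    Complex.polarCoord.symm (r, θ) = circleMap 0 r θ := by
  simp [circleMap, Complex.exp_mul_I, ← Complex.ofReal_cos, ← Complex.ofReal_sin]

theorem integral_Ioo_neg_pi_pi_circleMap (h : ℂ → E) (r : ℝ) :
    ∫ θ in Ioo (-π) π, h (circleMap 0 r θ) = ∫ θ in 0..2 * π, h (circleMap 0 r θ) := by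
  have hper := ((periodic_circleMap 0 r).comp h).intervalIntegral_add_eq (-π) 0
  rw [show -π + 2 * π = π by ring, zero_add] at hper
  rw [← integral_Ioc_eq_integral_Ioo, ← intervalIntegral.integral_of_le (by linarith [pi_pos])]
  exact hper

theorem integral_ball_eq_integral_circleAverage {h : ℂ → E} {R : ℝ}
    (hh : IntegrableOn h (ball 0 R)) :
    ∫ α in ball 0 R, h α = ∫ r in Ioo 0 R, (2 * π * r) • circleAverage h 0 r := by
  have hs : MeasurableSet (Ioo 0 R ×ˢ Ioo (-π) π) := measurableSet_Ioo.prod measurableSet_Ioo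
  have hst : Ioo 0 R ×ˢ Ioo (-π) π ⊆ polarCoord.target := prod_mono Ioo_subset_Ioi_self subset_rfl
  have hball : ball (0 : ℂ) R =ᵐ[volume] Complex.polarCoord.symm '' (Ioo 0 R ×ˢ Ioo (-π) π) := by
    rw [Complex.polarCoord_symm_image_Ioo_prod]
    simpa using (Complex.slitPlane_ae_eq_univ.inter (ae_eq_refl (ball (0 : ℂ) R))).symm
  rw [integrableOn_congr_set_ae hball, Complex.integrableOn_polarCoord_symm_image_iff hs hst,
    Measure.volume_eq_prod] at hh
  rw [setIntegral_congr_set hball, Complex.setIntegral_polarCoord_symm_image hs hst,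
    Measure.volume_eq_prod, setIntegral_prod _ hh]
  refine setIntegral_congr_fun measurableSet_Ioo fun r _ ↦ ?_
  simp only [Complex.polarCoord_symm_eq_circleMap]
  rw [integral_smul, integral_Ioo_neg_pi_pi_circleMap, circleAverage_def, smul_smul]
  congr 1
  field_simp

end PolarCoord

theorem normSq_one_sub_conj_mul_sub_normSq_sub (a z : ℂ) :
    normSq (1 - conj a * z) - normSq (a - z) = (1 - normSq a) * (1 - normSq z) := by
  simp only [normSq_apply, sub_re, sub_im, mul_re, mul_im, conj_re, conj_im, one_re, one_im]
  ring

theorem norm_phi_le_one {a z : ℂ} (ha : ‖a‖ ≤ 1) (hz : ‖z‖ ≤ 1) : ‖phi a z‖ ≤ 1 := by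
  have hnum : ‖a - z‖ ≤ ‖1 - conj a * z‖ := by
    rw [← sq_le_sq₀ (norm_nonneg _) (norm_nonneg _), Complex.sq_norm, Complex.sq_norm,
      ← sub_nonneg, normSq_one_sub_conj_mul_sub_normSq_sub, ← Complex.sq_norm, ← Complex.sq_norm]
    exact mul_nonneg (by nlinarith [norm_nonneg a]) (by nlinarith [norm_nonneg z])
  rw [phi, norm_div]
  exact div_le_one_of_le₀ hnum (norm_nonneg _)

theorem norm_phi_div_conj_le {a z : ℂ} (ha : ‖a‖ ≤ 1) (hz : ‖z‖ ≤ 1) :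
    ‖phi a z / conj a‖ ≤ ‖a‖⁻¹ := by
  rw [norm_div, norm_conj, ← one_div]
  exact div_le_div_of_nonneg_right (norm_phi_le_one ha hz) (norm_nonneg a)

theorem measurable_phi_div_conj (z : ℂ) : Measurable fun a ↦ phi a z / conj a := by
  unfold phi; fun_prop

theorem phi_div_conj_eq_of_norm_eq {α z : ℂ} {r : ℝ} (hα : ‖α‖ = r) (hr : 0 < r)
    (hrz : r * ‖z‖ < 1) :
    phi α z / conj α = (α / (α - r ^ 2 * z)) * (α * (α - z) / r ^ 2) := by
  have hα0 : α ≠ 0 := by rintro rfl; simp at hα; linarith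
  have hconj : conj α = r ^ 2 / α := by
    rw [eq_div_iff hα0, ← normSq_eq_conj_mul_self, normSq_eq_norm_sq, hα]; push_cast; ring
  have hw : α - r ^ 2 * z ≠ 0 := by
    rw [sub_ne_zero]; rintro h
    have := congrArg norm h
    rw [hα, norm_mul, norm_pow, norm_real, Real.norm_of_nonneg hr.le] at this
    nlinarith
  have hr0 : (r : ℂ) ≠ 0 := ofReal_ne_zero.2 hr.ne'
  rw [phi, hconj]
  field_simp

theorem circleAverage_phi_div_conj_mul {g : ℂ → ℂ} {z : ℂ} {r : ℝ} (hr : 0 < r)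
    (hrz : r * ‖z‖ < 1) (hg : DiffContOnCl ℂ g (ball 0 r)) :
    circleAverage (fun α ↦ phi α z / conj α * g α) 0 r = z ^ 2 * (r ^ 2 - 1) * g (r ^ 2 * z) := by
  set F : ℂ → ℂ := fun α ↦ α * (α - z) / r ^ 2 * g α
  have hF : DiffContOnCl ℂ F (ball 0 |r|) := by
    rw [abs_of_pos hr]
    exact (Differentiable.diffContOnCl (f := fun α : ℂ ↦ α * (α - z) / r ^ 2)
      (by fun_prop)).smul hg
  have hw : (r : ℂ) ^ 2 * z ∈ ball 0 |r| := by
    rw [mem_ball_zero_iff, norm_mul, norm_pow, norm_real, Real.norm_eq_abs, sq_abs]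
    rw [abs_of_pos hr]; nlinarith
  calc circleAverage (fun α ↦ phi α z / conj α * g α) 0 r
      = circleAverage (fun α ↦ ((α - 0) / (α - r ^ 2 * z)) • F α) 0 r := by
        refine circleAverage_congr_sphere fun α hα ↦ ?_
        rw [mem_sphere_zero_iff_norm, abs_of_pos hr] at hα
        simp only [phi_div_conj_eq_of_norm_eq hα hr hrz, F, sub_zero, smul_eq_mul]
        ring
    _ = z ^ 2 * (r ^ 2 - 1) * g (r ^ 2 * z) := by
        rw [hF.circleAverage_smul_div hw]
        have hr0 : (r : ℂ) ≠ 0 := ofReal_ne_zero.2 hr.ne'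
        simp only [F]
        field_simp

theorem integrableOn_inv_norm_ball (R : ℝ) : IntegrableOn (fun α : ℂ ↦ ‖α‖⁻¹) (ball 0 R) := by
  refine integrableOn_ball_of_norm_le_rpow (C := 1) (α := 1) (by simp) (by simp)
    (ae_of_all _ fun α ↦ ?_) (by fun_prop)
  simp [Real.rpow_neg_one]

theorem integrableOn_phi_div_conj_mul {g : ℂ → ℂ} {z : ℂ} (hz : ‖z‖ ≤ 1)
    (hgc : ContinuousOn g (ball 0 1)) (hgi : IntegrableOn g (ball 0 1)) :
    IntegrableOn (fun α ↦ phi α z / conj α * g α) (ball 0 1) := by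
  obtain ⟨M, hM⟩ := (isCompact_closedBall (0 : ℂ) (1 / 2)).exists_bound_of_continuousOn
    (hgc.mono (closedBall_subset_ball (by norm_num)))
  refine (((integrableOn_inv_norm_ball 1).const_mul M).add (hgi.norm.const_mul 2)).mono'
    ((measurable_phi_div_conj z).aestronglyMeasurable.mul hgi.aestronglyMeasurable) ?_
  filter_upwards [ae_restrict_mem measurableSet_ball] with α hα
  have hK := norm_phi_div_conj_le (mem_ball_zero_iff.1 hα).le hz
  rw [norm_mul, Pi.add_apply]
  rcases le_or_gt ‖α‖ (1 / 2) with hsmall | hlarge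
  · calc ‖phi α z / conj α‖ * ‖g α‖ ≤ ‖α‖⁻¹ * M :=
          mul_le_mul hK (hM α (mem_closedBall_zero_iff.2 hsmall)) (norm_nonneg _) (by positivity)
      _ ≤ M * ‖α‖⁻¹ + 2 * ‖g α‖ := by nlinarith [norm_nonneg (g α)]
  · have h2 : ‖α‖⁻¹ ≤ 2 := by rw [inv_le_comm₀ (by linarith) (by norm_num)]; linarith
    calc ‖phi α z / conj α‖ * ‖g α‖ ≤ 2 * ‖g α‖ :=
          mul_le_mul_of_nonneg_right (hK.trans h2) (norm_nonneg _)
      _ ≤ M * ‖α‖⁻¹ + 2 * ‖g α‖ := by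
          have := (norm_nonneg _).trans (hM 0 (mem_closedBall_self (by norm_num)))
          nlinarith [inv_nonneg.2 (norm_nonneg α)]

theorem ofReal_mul_mem_ball {R : ℝ} {z : ℂ} (hz : z ∈ ball 0 R) {s : ℝ} (hs : s ∈ Icc 0 1) :
    (s : ℂ) * z ∈ ball 0 R := by
  simpa [real_smul] using
    (convex_ball (0 : ℂ) R).smul_mem_of_zero_mem (mem_ball_self (pos_of_mem_ball hz)) hz hs

theorem integral_smul_comp_sq {E : Type*} [NormedAddCommGroup E] [NormedSpace ℝ E] {G : ℝ → E}
    (hG : ContinuousOn G (Icc 0 1)) :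
    ∫ r in (0 : ℝ)..1, (2 * r) • G (r ^ 2) = ∫ s in (0 : ℝ)..1, G s := by
  have := intervalIntegral.integral_deriv_smul_comp' (a := 0) (b := 1) (f := fun r : ℝ ↦ r ^ 2)
    (f' := fun r ↦ 2 * r) (g := G) (fun r _ ↦ by simpa using hasDerivAt_pow 2 r) (by fun_prop) ?_
  · simpa using this
  · refine hG.mono ?_
    rintro _ ⟨r, hr, rfl⟩
    rw [uIcc_of_le zero_le_one] at hr
    exact ⟨sq_nonneg r, pow_le_one₀ hr.1 hr.2⟩

theorem HasDerivAt.comp_ofReal_mul {F : ℂ → ℂ} {F' z : ℂ} {s : ℝ}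
    (hF : HasDerivAt F F' (s * z)) :
    HasDerivAt (fun t : ℝ ↦ F (t * z)) (F' * z) s := by
  simpa using (hF.comp (s : ℂ) ((hasDerivAt_id (s : ℂ)).mul_const z)).comp_ofReal

theorem integral_sq_mul_sub_one_mul_deriv_deriv_comp {f : ℂ → ℂ} {R : ℝ} {z : ℂ}
    (hf : DifferentiableOn ℂ f (ball 0 R)) (hz : z ∈ ball 0 R) :
    ∫ s in (0 : ℝ)..1, z ^ 2 * (s - 1) * deriv (deriv f) (s * z) = f 0 + z * deriv f 0 - f z := by
  have hA : AnalyticOnNhd ℂ f (ball 0 R) := hf.analyticOnNhd isOpen_ball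
  have hseg : ∀ s ∈ uIcc (0 : ℝ) 1, (s : ℂ) * z ∈ ball 0 R := fun s hs ↦
    ofReal_mul_mem_ball hz (by rwa [uIcc_of_le zero_le_one] at hs)
  have hderiv : ∀ s ∈ uIcc (0 : ℝ) 1, HasDerivAt
      (fun t : ℝ ↦ (t - 1) * z * deriv f (t * z) - f (t * z))
      (z ^ 2 * (s - 1) * deriv (deriv f) (s * z)) s := by
    intro s hs
    have hlin : HasDerivAt (fun t : ℝ ↦ ((t : ℂ) - 1) * z) z s := by
      simpa using (((hasDerivAt_id (s : ℂ)).sub_const 1).mul_const z).comp_ofReal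
    have hf' := ((hA.deriv _ (hseg s hs)).differentiableAt.hasDerivAt).comp_ofReal_mul
    have hf := ((hA _ (hseg s hs)).differentiableAt.hasDerivAt).comp_ofReal_mul
    exact ((hlin.mul hf').sub hf).congr_deriv (by ring)
  have hcont : ContinuousOn (fun s : ℝ ↦ z ^ 2 * (s - 1) * deriv (deriv f) (s * z)) (uIcc 0 1) :=
    (by fun_prop : Continuous fun s : ℝ ↦ z ^ 2 * ((s : ℂ) - 1)).continuousOn.mul
      ((hA.deriv.deriv.continuousOn).comp (by fun_prop) hseg)
  rw [intervalIntegral.integral_eq_sub_of_hasDerivAt hderiv hcont.intervalIntegrable]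
  simp only [ofReal_one, ofReal_zero, sub_self, zero_mul, one_mul, zero_sub]
  ring

theorem integral_ball_phi_div_conj_mul_deriv_deriv {f : ℂ → ℂ}
    (hf : DifferentiableOn ℂ f (ball 0 1)) (hg : IntegrableOn (deriv (deriv f)) (ball 0 1))
    {z : ℂ} (hz : z ∈ ball 0 1) :
    ∫ α in ball 0 1, phi α z / conj α * deriv (deriv f) α = π * (f 0 + z * deriv f 0 - f z) := by
  set g := deriv (deriv f)
  set G : ℝ → ℂ := fun s ↦ z ^ 2 * (s - 1) * g (s * z)
  have hg' : DifferentiableOn ℂ g (ball 0 1) :=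
    ((hf.analyticOnNhd isOpen_ball).deriv.deriv).differentiableOn
  have hG : ContinuousOn G (Icc 0 1) :=
    (by fun_prop : Continuous fun s : ℝ ↦ z ^ 2 * ((s : ℂ) - 1)).continuousOn.mul
      (hg'.continuousOn.comp (by fun_prop) fun s hs ↦ ofReal_mul_mem_ball hz hs)
  have hz1 : ‖z‖ < 1 := mem_ball_zero_iff.1 hz
  rw [integral_ball_eq_integral_circleAverage
    (integrableOn_phi_div_conj_mul hz1.le hg'.continuousOn hg)]
  calc ∫ r in Ioo 0 1, (2 * π * r) • circleAverage (fun α ↦ phi α z / conj α * g α) 0 r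
      = ∫ r in Ioo 0 1, π * ((2 * r) • G (r ^ 2)) := by
        refine setIntegral_congr_fun measurableSet_Ioo fun r hr ↦ ?_
        have hgr : DiffContOnCl ℂ g (ball 0 r) :=
          (hg'.mono (closedBall_subset_ball hr.2)).diffContOnCl_ball subset_rfl
        rw [circleAverage_phi_div_conj_mul hr.1 (by nlinarith [norm_nonneg z, hr.1, hr.2]) hgr]
        simp only [G, real_smul]
        push_cast
        ring
    _ = π * ∫ r in (0 : ℝ)..1, (2 * r) • G (r ^ 2) := by
        rw [integral_const_mul, intervalIntegral.integral_of_le zero_le_one,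
          integral_Ioc_eq_integral_Ioo]
    _ = π * ∫ s in (0 : ℝ)..1, G s := by rw [integral_smul_comp_sq hG]
    _ = π * (f 0 + z * deriv f 0 - f z) := by
        rw [integral_sq_mul_sub_one_mul_deriv_deriv_comp hf hz]

theorem stmt11 (f : ℂ → ℂ) (hf : DifferentiableOn ℂ f (ball (0:ℂ) 1))
    (hint : (∫⁻ α, ENNReal.ofReal ‖deriv (deriv f) α‖ ∂dA) < ⊤) :
    ∀ z ∈ ball (0:ℂ) 1,
      f z = f 0 + deriv f 0 * z -
        ∫ α, (phi α z / (starRingEnd ℂ) α) * deriv (deriv f) α ∂dA := by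
  intro z hz
  have hg : IntegrableOn (deriv (deriv f)) (ball 0 1) := by
    have hdA : Integrable (deriv (deriv f)) dA :=
      ⟨(measurable_deriv _).aestronglyMeasurable,
        by simpa [HasFiniteIntegral, ofReal_norm] using hint⟩
    rwa [dA, integrable_smul_measure (by simp) (by simpa using pi_pos)] at hdA
  rw [dA, integral_smul_measure, integral_ball_phi_div_conj_mul_deriv_deriv hf hg hz,
    ENNReal.toReal_inv, ENNReal.toReal_ofReal pi_pos.le, real_smul]
  have hπ : (π : ℂ) ≠ 0 := ofReal_ne_zero.2 pi_ne_zero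
  push_cast
  field_simp
  ring
end
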